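/- arXiv:1905.10551 — 12 statements merged into one kernel-verified Lean document; each statement's English description precedes it below -/
import Mathlib

section
/- Let φ and g be analytic functions on the open unit disk 𝔻 such that φ(z) ≠ 0 and g(z) ≠ 0 for all z ∈ 𝔻\{0}, and define f(z) = φ(z)·|g(z)|². Then for every z ∈ 𝔻\{0}, Re((z·f_z(z) − z̄·f_z̄(z))/f(z)) = Re(z·φ′(z)/φ(z)). Consequently, for each α ∈ [0,1), Re((z·f_z − z̄·f_z̄)/f) > α holds at every z ∈ 𝔻\{0} if and only if Re(z·φ′(z)/φ(z)) > α holds at every z ∈ 𝔻\{0}. -/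
/-! `D = -i ∂/∂θ` is the angular derivative, hence a derivation. On a holomorphic `h` it acts as
`z h'`, and on `conj ∘ h` as `-conj (z h')`. For `f = φ g ḡ` the Leibniz rule gives
`Df/f = zφ'/φ + w - w̄` with `w = z g'/g`, and `w - w̄` is purely imaginary. -/

open Complex Metric Set

/-- Wirtinger derivative `f_z = (1/2)(∂f/∂x - i ∂f/∂y)`. -/
noncomputable def wz (f : ℂ → ℂ) (z : ℂ) : ℂ :=
  (1 / 2) * (fderiv ℝ f z 1 - Complex.I * fderiv ℝ f z Complex.I)

/-- Wirtinger derivative `f_z̄ = (1/2)(∂f/∂x + i ∂f/∂y)`. -/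
noncomputable def wzbar (f : ℂ → ℂ) (z : ℂ) : ℂ :=
  (1 / 2) * (fderiv ℝ f z 1 + Complex.I * fderiv ℝ f z Complex.I)

/-- The operator `Df = z f_z - z̄ f_z̄`. -/
noncomputable def Dop (f : ℂ → ℂ) (z : ℂ) : ℂ :=
  z * wz f z - (starRingEnd ℂ) z * wzbar f z

open Topology ComplexConjugate

lemma Dop_eq_neg_I_mul_fderiv (f : ℂ → ℂ) (z : ℂ) :
    Dop f z = -I * fderiv ℝ f z (I * z) := by
  have hIz : I * z = z.re • I + z.im • (-1 : ℂ) := by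
    apply Complex.ext <;> simp
  rw [hIz, map_add, map_smul, map_smul, map_neg]
  apply Complex.ext <;> simp [Dop, wz, wzbar] <;> ring

lemma Dop_mul {f g : ℂ → ℂ} {z : ℂ} (hf : DifferentiableAt ℝ f z) (hg : DifferentiableAt ℝ g z) :
    Dop (f * g) z = Dop f z * g z + f z * Dop g z := by
  simp only [Dop_eq_neg_I_mul_fderiv, fderiv_mul hf hg, add_apply, smul_apply, smul_eq_mul]
  ring

lemma fderiv_real_apply_of_differentiableAt {h : ℂ → ℂ} {z : ℂ} (hh : DifferentiableAt ℂ h z)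
    (v : ℂ) : fderiv ℝ h z v = v * deriv h z := by
  rw [(hh.hasDerivAt.hasFDerivAt.restrictScalars ℝ).fderiv]
  simp

lemma Dop_of_differentiableAt {h : ℂ → ℂ} {z : ℂ} (hh : DifferentiableAt ℂ h z) :
    Dop h z = z * deriv h z := by
  rw [Dop_eq_neg_I_mul_fderiv, fderiv_real_apply_of_differentiableAt hh]
  ring_nf
  simp

lemma Dop_conj_comp {h : ℂ → ℂ} {z : ℂ} (hh : DifferentiableAt ℂ h z) :
    Dop (fun w => conj (h w)) z = -conj (z * deriv h z) := by
  have hconj : HasFDerivAt (fun w => conj (h w)) ((conjCLE : ℂ →L[ℝ] ℂ).comp (fderiv ℝ h z)) z :=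
    (conjCLE : ℂ →L[ℝ] ℂ).hasFDerivAt.comp z (hh.restrictScalars ℝ).hasFDerivAt
  rw [Dop_eq_neg_I_mul_fderiv, hconj.fderiv, ContinuousLinearMap.comp_apply,
    fderiv_real_apply_of_differentiableAt hh]
  simp only [ContinuousLinearEquiv.coe_coe, conjCLE_apply, map_mul, conj_I]
  ring_nf
  simp

lemma re_Dop_div_mul_normSq {φ g : ℂ → ℂ} {z : ℂ}
    (hφ : DifferentiableAt ℂ φ z) (hg : DifferentiableAt ℂ g z) (hφz : φ z ≠ 0) (hgz : g z ≠ 0) :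
    (Dop (fun w => φ w * (normSq (g w) : ℂ)) z / (φ z * normSq (g z))).re
      = (z * deriv φ z / φ z).re := by
  have hfun : (fun w => φ w * (normSq (g w) : ℂ)) = φ * (g * fun w => conj (g w)) := by
    funext w; simp [mul_conj]
  have hgR := hg.restrictScalars ℝ
  have hgc : DifferentiableAt ℝ (fun w => conj (g w)) z :=
    (conjCLE : ℂ →L[ℝ] ℂ).differentiableAt.comp z hgR
  set q := z * deriv g z / g z
  have hlog : Dop (φ * (g * fun w => conj (g w))) z / (φ z * normSq (g z))
      = z * deriv φ z / φ z + (q - conj q) := by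
    rw [Dop_mul (hφ.restrictScalars ℝ) (hgR.mul hgc), Dop_mul hgR hgc,
      Dop_of_differentiableAt hφ, Dop_of_differentiableAt hg, Dop_conj_comp hg, ← mul_conj]
    have hgc0 : conj (g z) ≠ 0 := by simpa using hgz
    simp only [q, Pi.mul_apply, map_div₀, map_mul]
    field_simp
    ring
  rw [hfun, hlog, add_re, sub_re, conj_re, sub_self, add_zero]

theorem stmt_0 (φ g f : ℂ → ℂ)
    (hφ : DifferentiableOn ℂ φ (ball (0 : ℂ) 1))
    (hg : DifferentiableOn ℂ g (ball (0 : ℂ) 1))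
    (hφne : ∀ z ∈ ball (0 : ℂ) 1 \ {0}, φ z ≠ 0)
    (hgne : ∀ z ∈ ball (0 : ℂ) 1 \ {0}, g z ≠ 0)
    (hf : ∀ z, f z = φ z * (Complex.normSq (g z) : ℂ)) :
    (∀ z ∈ ball (0 : ℂ) 1 \ {0},
        ((z * wz f z - (starRingEnd ℂ) z * wzbar f z) / f z).re
          = (z * deriv φ z / φ z).re) ∧
      ∀ α : ℝ, 0 ≤ α → α < 1 →
        ((∀ z ∈ ball (0 : ℂ) 1 \ {0},
            α < ((z * wz f z - (starRingEnd ℂ) z * wzbar f z) / f z).re) ↔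
          (∀ z ∈ ball (0 : ℂ) 1 \ {0}, α < (z * deriv φ z / φ z).re)) := by
  have hfun : f = fun w => φ w * (normSq (g w) : ℂ) := funext hf
  have key : ∀ z ∈ ball (0 : ℂ) 1 \ {0},
      ((z * wz f z - (starRingEnd ℂ) z * wzbar f z) / f z).re = (z * deriv φ z / φ z).re := by
    intro z hz
    have hnhds : ball (0 : ℂ) 1 ∈ 𝓝 z := isOpen_ball.mem_nhds hz.1
    change (Dop f z / f z).re = _
    rw [hfun]
    exact re_Dop_div_mul_normSq (hφ.differentiableAt hnhds) (hg.differentiableAt hnhds)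
      (hφne z hz) (hgne z hz)
  refine ⟨key, fun α _ _ => forall₂_congr fun z hz => ?_⟩
  rw [key z hz]
end

section
/- Let α ∈ [0,1), and let (aₙ)ₙ≥1 and (bₙ)ₙ≥1 be complex sequences such that the power series H(z) = Σₙ₌₁^∞ aₙ zⁿ and G(z) = Σₙ₌₁^∞ bₙ zⁿ converge for all z in the open unit disk 𝔻. Set h = exp(H) and g = exp(G), and suppose that Re(1 + z·h′(z)/h(z) − z·g′(z)/g(z)) > α for all z ∈ 𝔻. Then |aₙ − bₙ| ≤ 2(1−α)/n for every n ≥ 1. -/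
/-!
Put `p(z) = 1 - α + z h'/h - z g'/g = (1 - α) + ∑ n (aₙ - bₙ) zⁿ`; the hypothesis says `Re p ≥ 0`
on the disk, so the claim is Carathéodory's bound `|cₙ| ≤ 2 Re c₀` for the coefficients of `p`.
On a circle of radius `r < 1`, orthogonality of the `e^{ikθ}` gives
`∫ p(re^{iθ}) e^{-inθ} dθ = 2π cₙ rⁿ`, while `∫ conj (p(re^{iθ})) e^{-inθ} dθ = 0` for `n ≥ 1`.
Adding the two, `2π cₙ rⁿ = ∫ 2 Re p(re^{iθ}) e^{-inθ} dθ`, whose modulus is at most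
`∫ 2 Re p(re^{iθ}) dθ = 4π Re c₀`. Finally let `r → 1`.
-/

open Complex Metric Set Filter MeasureTheory

open scoped Real Topology ComplexConjugate

section PowerSeries

variable {c : ℕ → ℂ} {f : ℂ → ℂ} {R : ℝ}

lemma summable_norm_mul_pow_of_hasSum
    (hf : ∀ z ∈ ball (0 : ℂ) R, HasSum (fun k => c k * z ^ k) (f z))
    {ρ : ℝ} (hρ0 : 0 ≤ ρ) (hρR : ρ < R) :
    Summable fun k => ‖c k‖ * ρ ^ k := by
  obtain ⟨ρ', hρρ', hρ'R⟩ := exists_between hρR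
  have hρ' : 0 < ρ' := hρ0.trans_lt hρρ'
  have hmem : (ρ' : ℂ) ∈ ball (0 : ℂ) R := by simpa [abs_of_pos hρ'] using hρ'R
  obtain ⟨C, hC⟩ := (hf _ hmem).summable.tendsto_atTop_zero.norm.bddAbove_range
  refine .of_nonneg_of_le (fun k => by positivity) (fun k => ?_)
    ((summable_geometric_of_lt_one (div_nonneg hρ0 hρ'.le) ((div_lt_one hρ').2 hρρ')).mul_left C)
  have hk : ‖c k‖ * ρ' ^ k ≤ C := by simpa [abs_of_pos hρ'] using hC (mem_range_self k)
  calc ‖c k‖ * ρ ^ k = ‖c k‖ * ρ' ^ k * (ρ / ρ') ^ k := by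
        rw [div_pow, mul_assoc, mul_div_cancel₀ _ (pow_ne_zero _ hρ'.ne')]
    _ ≤ C * (ρ / ρ') ^ k := by gcongr

lemma norm_mul_pow_le_of_mem_ball {ρ : ℝ} {w : ℂ} (hw : w ∈ ball (0 : ℂ) ρ) (k : ℕ) :
    ‖c k * w ^ k‖ ≤ ‖c k‖ * ρ ^ k := by
  rw [norm_mul, norm_pow]
  gcongr
  exact (mem_ball_zero_iff.1 hw).le

lemma differentiableOn_of_hasSum
    (hf : ∀ z ∈ ball (0 : ℂ) R, HasSum (fun k => c k * z ^ k) (f z)) :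
    DifferentiableOn ℂ f (ball 0 R) := by
  intro z hz
  obtain ⟨ρ, hzρ, hρR⟩ := exists_between (mem_ball_zero_iff.1 hz)
  have hsum : DifferentiableOn ℂ (fun w => ∑' k, c k * w ^ k) (ball 0 ρ) :=
    differentiableOn_tsum_of_summable_norm
      (summable_norm_mul_pow_of_hasSum hf ((norm_nonneg z).trans hzρ.le) hρR)
      (fun k => by fun_prop) isOpen_ball fun k w hw => norm_mul_pow_le_of_mem_ball hw k
  have hfρ := hsum.congr fun w hw => (hf w (ball_subset_ball hρR.le hw)).tsum_eq.symm
  exact (hfρ.differentiableAt (isOpen_ball.mem_nhds (mem_ball_zero_iff.2 hzρ)))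
    |>.differentiableWithinAt

lemma hasSum_mul_deriv_of_hasSum
    (hf : ∀ z ∈ ball (0 : ℂ) R, HasSum (fun k => c k * z ^ k) (f z))
    {z : ℂ} (hz : z ∈ ball (0 : ℂ) R) :
    HasSum (fun k => k * c k * z ^ k) (z * deriv f z) := by
  obtain ⟨ρ, hzρ, hρR⟩ := exists_between (mem_ball_zero_iff.1 hz)
  have hderiv := hasSum_deriv_of_summable_norm
    (summable_norm_mul_pow_of_hasSum hf ((norm_nonneg z).trans hzρ.le) hρR)
    (fun k => (by fun_prop : DifferentiableOn ℂ (fun w => c k * w ^ k) (ball 0 ρ))) isOpen_ball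
    (fun k w hw => norm_mul_pow_le_of_mem_ball hw k) (mem_ball_zero_iff.2 hzρ)
  have hfρ : f =ᶠ[𝓝 z] fun w => ∑' k, c k * w ^ k :=
    eventuallyEq_of_mem (isOpen_ball.mem_nhds hz) fun w hw => (hf w hw).tsum_eq.symm
  rw [← hfρ.deriv_eq] at hderiv
  refine (hderiv.mul_left z).congr_fun fun k => ?_
  rcases k with _ | k
  · simp
  · simp only [deriv_const_mul_field', deriv_pow_field, Nat.add_sub_cancel]
    push_cast
    ring

lemma hasSum_pow_of_hasSum_succ
    (hf : ∀ z ∈ ball (0 : ℂ) R, HasSum (fun n => c (n + 1) * z ^ (n + 1)) (f z)) :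
    ∀ z ∈ ball (0 : ℂ) R, HasSum (fun n => c n * z ^ n) (c 0 + f z) := by
  intro z hz
  simpa only [pow_zero, mul_one] using (hf z hz).zero_add (f := fun n => c n * z ^ n)

lemma hasSum_mul_logDeriv_exp_of_hasSum_succ
    (hf : ∀ z ∈ ball (0 : ℂ) R, HasSum (fun n => c (n + 1) * z ^ (n + 1)) (f z))
    {z : ℂ} (hz : z ∈ ball (0 : ℂ) R) :
    HasSum (fun k => k * c k * z ^ k) (z * deriv (fun w => exp (f w)) z / exp (f z)) := by
  have hf₀ := hasSum_pow_of_hasSum_succ hf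
  have hdiff : DifferentiableAt ℂ f z := by
    have := (differentiableOn_of_hasSum hf₀).differentiableAt (isOpen_ball.mem_nhds hz)
    rwa [differentiableAt_const_add_iff] at this
  rw [deriv_cexp hdiff, mul_comm (exp (f z)), ← mul_assoc,
    mul_div_cancel_right₀ _ (exp_ne_zero _), ← deriv_const_add (c 0)]
  exact hasSum_mul_deriv_of_hasSum hf₀ hz

end PowerSeries

lemma integral_exp_int_mul_I (j : ℤ) :
    ∫ θ in (0 : ℝ)..2 * π, exp (j * θ * I) = if j = 0 then (2 * π : ℂ) else 0 := by
  split_ifs with hj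
  · simp [hj]
  · have hc : (j : ℂ) * I ≠ 0 := mul_ne_zero (Int.cast_ne_zero.2 hj) I_ne_zero
    have hperiod : exp (j * I * (2 * π : ℝ)) = 1 := by
      rw [show (j : ℂ) * I * (2 * π : ℝ) = j * (2 * π * I) by push_cast; ring]
      exact exp_int_mul_two_pi_mul_I j
    simp_rw [mul_right_comm _ _ I]
    rw [integral_exp_mul_complex hc, hperiod]
    simp

section Circle

variable {c : ℕ → ℂ} {f : ℂ → ℂ} {R r : ℝ}

lemma circleMap_mem_ball_zero (hr0 : 0 ≤ r) (hrR : r < R) (θ : ℝ) :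
    circleMap 0 r θ ∈ ball (0 : ℂ) R := by
  rw [mem_ball_zero_iff, norm_circleMap_zero, abs_of_nonneg hr0]
  exact hrR

lemma hasSum_integral_circleMap_mul_exp
    (hf : ∀ z ∈ ball (0 : ℂ) R, HasSum (fun k => c k * z ^ k) (f z))
    (hr0 : 0 ≤ r) (hrR : r < R) (m : ℤ) :
    HasSum (fun k : ℕ => c k * r ^ k * ∫ θ in (0 : ℝ)..2 * π, exp (((k + m : ℤ) : ℂ) * θ * I))
      (∫ θ in (0 : ℝ)..2 * π, f (circleMap 0 r θ) * exp (m * θ * I)) := by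
  have hterm (k : ℕ) : ∫ θ in (0 : ℝ)..2 * π, c k * circleMap 0 r θ ^ k * exp (m * θ * I)
      = c k * r ^ k * ∫ θ in (0 : ℝ)..2 * π, exp (((k + m : ℤ) : ℂ) * θ * I) := by
    rw [← intervalIntegral.integral_const_mul]
    refine intervalIntegral.integral_congr fun θ _ => ?_
    rw [circleMap_zero, mul_pow, ← exp_nat_mul, mul_assoc, mul_assoc, ← exp_add]
    push_cast
    ring_nf
  refine (intervalIntegral.hasSum_integral_of_dominated_convergence (fun k _ => ‖c k‖ * r ^ k)
    (fun k => (by fun_prop : Continuous _).aestronglyMeasurable)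
    (fun k => Eventually.of_forall fun θ _ => ?_)
    (Eventually.of_forall fun _ _ => summable_norm_mul_pow_of_hasSum hf hr0 hrR)
    intervalIntegrable_const
    (Eventually.of_forall fun θ _ => (hf _ (circleMap_mem_ball_zero hr0 hrR θ)).mul_right _)
    ).congr_fun fun k => (hterm k).symm
  simp [norm_exp, abs_of_nonneg hr0]

lemma integral_circleMap_mul_exp_neg
    (hf : ∀ z ∈ ball (0 : ℂ) R, HasSum (fun k => c k * z ^ k) (f z))
    (hr0 : 0 ≤ r) (hrR : r < R) (n : ℕ) :
    ∫ θ in (0 : ℝ)..2 * π, f (circleMap 0 r θ) * exp (-n * θ * I) = 2 * π * c n * r ^ n := by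
  have h := hasSum_integral_circleMap_mul_exp hf hr0 hrR (-n)
  simp only [integral_exp_int_mul_I, ← sub_eq_add_neg, sub_eq_zero, Nat.cast_inj, Int.cast_neg,
    Int.cast_natCast, mul_ite, mul_zero] at h
  rw [show (2 * π * c n * r ^ n : ℂ) = c n * r ^ n * (2 * π) by ring]
  refine h.unique ((hasSum_ite_eq n _).congr_fun fun k => ?_)
  split_ifs with hk <;> simp [hk]

lemma integral_circleMap_mul_exp_of_ne_zero
    (hf : ∀ z ∈ ball (0 : ℂ) R, HasSum (fun k => c k * z ^ k) (f z))
    (hr0 : 0 ≤ r) (hrR : r < R) {n : ℕ} (hn : n ≠ 0) :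
    ∫ θ in (0 : ℝ)..2 * π, f (circleMap 0 r θ) * exp (n * θ * I) = 0 := by
  have h := hasSum_integral_circleMap_mul_exp hf hr0 hrR n
  simp only [integral_exp_int_mul_I, Int.cast_natCast] at h
  refine h.unique ?_
  convert hasSum_zero with k
  rw [if_neg (by omega), mul_zero]

end Circle

section Caratheodory

variable {c : ℕ → ℂ} {f : ℂ → ℂ} {R r : ℝ}

lemma norm_coeff_mul_pow_le_two_mul_re_of_lt
    (hf : ∀ z ∈ ball (0 : ℂ) R, HasSum (fun k => c k * z ^ k) (f z))
    (hre : ∀ z ∈ ball (0 : ℂ) R, 0 ≤ (f z).re) (hr0 : 0 ≤ r) (hrR : r < R) {n : ℕ} (hn : n ≠ 0) :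
    ‖c n‖ * r ^ n ≤ 2 * (c 0).re := by
  set u : ℝ → ℂ := fun θ => f (circleMap 0 r θ)
  have hu : Continuous u := (differentiableOn_of_hasSum hf).continuousOn.comp_continuous
    (continuous_circleMap 0 r) (circleMap_mem_ball_zero hr0 hrR)
  have hconj : ∫ θ in (0 : ℝ)..2 * π, conj (u θ) * exp (-n * θ * I) = 0 := by
    calc _ = ∫ θ in (0 : ℝ)..2 * π, conj (u θ * exp (n * θ * I)) := by
          refine intervalIntegral.integral_congr fun θ _ => ?_
          simp [← exp_conj]
      _ = 0 := by
          rw [intervalIntegral.intervalIntegral_conj,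
            integral_circleMap_mul_exp_of_ne_zero hf hr0 hrR hn, map_zero]
  have hfourier : 2 * π * c n * r ^ n
      = ∫ θ in (0 : ℝ)..2 * π, ((2 * (u θ).re : ℝ) : ℂ) * exp (-n * θ * I) := by
    have hi₁ : IntervalIntegrable (fun θ : ℝ => u θ * exp (-n * θ * I)) volume 0 (2 * π) :=
      Continuous.intervalIntegrable (by fun_prop) _ _
    have hi₂ : IntervalIntegrable (fun θ : ℝ => conj (u θ) * exp (-n * θ * I)) volume 0 (2 * π) :=
      Continuous.intervalIntegrable (by fun_prop) _ _
    rw [← integral_circleMap_mul_exp_neg hf hr0 hrR n, ← add_zero (∫ θ in (0 : ℝ)..2 * π, u θ * _),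
      ← hconj, ← intervalIntegral.integral_add hi₁ hi₂]
    exact intervalIntegral.integral_congr fun θ _ => by rw [← add_mul, add_conj]
  have hmean : ∫ θ in (0 : ℝ)..2 * π, 2 * (u θ).re = 2 * π * (2 * (c 0).re) := by
    have h0 : ∫ θ in (0 : ℝ)..2 * π, u θ = 2 * π * c 0 := by
      simpa using integral_circleMap_mul_exp_neg hf hr0 hrR 0
    have hmean_re :=
      intervalIntegral.intervalIntegral_re (hu.intervalIntegrable (μ := volume) 0 (2 * π))
    simp only [RCLike.re_to_complex, h0] at hmean_re
    rw [intervalIntegral.integral_const_mul, hmean_re]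
    simp only [mul_re, mul_im, re_ofNat, im_ofNat, ofReal_re, ofReal_im, mul_zero, zero_mul,
      sub_zero, add_zero]
    ring
  have hnorm : 2 * π * (‖c n‖ * r ^ n) ≤ 2 * π * (2 * (c 0).re) := calc
    2 * π * (‖c n‖ * r ^ n) = ‖2 * π * c n * r ^ n‖ := by
        simp only [norm_mul, norm_ofNat, norm_real, Real.norm_eq_abs, abs_of_pos Real.pi_pos,
          norm_pow, abs_of_nonneg hr0]
        ring
    _ = ‖∫ θ in (0 : ℝ)..2 * π, ((2 * (u θ).re : ℝ) : ℂ) * exp (-n * θ * I)‖ := by rw [hfourier]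
    _ ≤ ∫ θ in (0 : ℝ)..2 * π, ‖((2 * (u θ).re : ℝ) : ℂ) * exp (-n * θ * I)‖ :=
        intervalIntegral.norm_integral_le_integral_norm Real.two_pi_pos.le
    _ = ∫ θ in (0 : ℝ)..2 * π, 2 * (u θ).re := by
        refine intervalIntegral.integral_congr fun θ _ => ?_
        have hθ : 0 ≤ (u θ).re := hre _ (circleMap_mem_ball_zero hr0 hrR θ)
        simp [norm_exp, abs_of_nonneg hθ]
    _ = 2 * π * (2 * (c 0).re) := hmean
  exact le_of_mul_le_mul_left hnorm Real.two_pi_pos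

theorem norm_coeff_mul_pow_le_two_mul_re (hR : 0 < R)
    (hf : ∀ z ∈ ball (0 : ℂ) R, HasSum (fun k => c k * z ^ k) (f z))
    (hre : ∀ z ∈ ball (0 : ℂ) R, 0 ≤ (f z).re) {n : ℕ} (hn : n ≠ 0) :
    ‖c n‖ * R ^ n ≤ 2 * (c 0).re := by
  refine le_of_tendsto (((continuous_const.mul (continuous_pow n)).tendsto R).mono_left
    (nhdsWithin_le_nhds (s := Iio R))) ?_
  filter_upwards [Ioo_mem_nhdsLT hR] with r hr
  exact norm_coeff_mul_pow_le_two_mul_re_of_lt hf hre hr.1.le hr.2 hn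

end Caratheodory

theorem stmt_3_general (α : ℝ)
    (a b : ℕ → ℂ) (H G h g : ℂ → ℂ)
    (hH : ∀ z ∈ ball (0 : ℂ) 1, HasSum (fun n : ℕ => a (n + 1) * z ^ (n + 1)) (H z))
    (hG : ∀ z ∈ ball (0 : ℂ) 1, HasSum (fun n : ℕ => b (n + 1) * z ^ (n + 1)) (G z))
    (hh : ∀ z, h z = Complex.exp (H z))
    (hg : ∀ z, g z = Complex.exp (G z))
    (hstar : ∀ z ∈ ball (0 : ℂ) 1,
        α < (1 + z * deriv h z / h z - z * deriv g z / g z).re) :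
    ∀ n : ℕ, 1 ≤ n → ‖a n - b n‖ ≤ 2 * (1 - α) / n := by
  intro n hn
  obtain rfl : h = fun w => exp (H w) := funext hh
  obtain rfl : g = fun w => exp (G w) := funext hg
  set c : ℕ → ℂ := fun k => (if k = 0 then 1 - α else 0) + k * (a k - b k)
  set p : ℂ → ℂ := fun z => 1 - α +
    (z * deriv (fun w => exp (H w)) z / exp (H z) - z * deriv (fun w => exp (G w)) z / exp (G z))
  have hp : ∀ z ∈ ball (0 : ℂ) 1, HasSum (fun k => c k * z ^ k) (p z) := by
    intro z hz
    refine ((hasSum_ite_eq 0 (1 - α : ℂ)).add ((hasSum_mul_logDeriv_exp_of_hasSum_succ hH hz).sub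
      (hasSum_mul_logDeriv_exp_of_hasSum_succ hG hz))).congr_fun fun k => ?_
    rcases k with _ | k <;> simp [c, mul_sub, sub_mul]
  have hre : ∀ z ∈ ball (0 : ℂ) 1, 0 ≤ (p z).re := by
    intro z hz
    have := hstar z hz
    simp only [p, add_re, sub_re, one_re, ofReal_re] at this ⊢
    linarith
  have hbound := norm_coeff_mul_pow_le_two_mul_re one_pos hp hre (n := n) (by omega)
  have hcn : ‖c n‖ = n * ‖a n - b n‖ := by simp [c, show n ≠ 0 by omega]
  have hc0 : (c 0).re = 1 - α := by simp [c]
  rw [one_pow, mul_one, hcn, hc0] at hbound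
  rw [le_div_iff₀ (by exact_mod_cast hn), mul_comm]
  exact hbound

theorem stmt_3 (α : ℝ) (hα0 : 0 ≤ α) (hα1 : α < 1)
    (a b : ℕ → ℂ) (H G h g : ℂ → ℂ)
    (hH : ∀ z ∈ ball (0 : ℂ) 1, HasSum (fun n : ℕ => a (n + 1) * z ^ (n + 1)) (H z))
    (hG : ∀ z ∈ ball (0 : ℂ) 1, HasSum (fun n : ℕ => b (n + 1) * z ^ (n + 1)) (G z))
    (hh : ∀ z, h z = Complex.exp (H z))
    (hg : ∀ z, g z = Complex.exp (G z))
    (hstar : ∀ z ∈ ball (0 : ℂ) 1,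
        α < (1 + z * deriv h z / h z - z * deriv g z / g z).re) :
    ∀ n : ℕ, 1 ≤ n → ‖a n - b n‖ ≤ 2 * (1 - α) / n :=
  stmt_3_general α a b H G h g hH hG hh hg hstar
end

section
/- Let (aₙ)ₙ≥1 and (bₙ)ₙ≥1 be complex sequences such that the power series H(z) = Σₙ₌₁^∞ aₙ zⁿ and G(z) = Σₙ₌₁^∞ bₙ zⁿ converge for all z in the open unit disk 𝔻. Set h = exp(H) and g = exp(G), and suppose that Re(1 + z·h′(z)/h(z) − z·g′(z)/g(z)) > 0 for all z ∈ 𝔻. Then |aₙ − bₙ| ≤ 2/n for every n ≥ 1. -/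
/-! Since `z h'/h = z H'` for `h = exp H`, the hypothesis says that `p = 1 + z (H - G)'`, whose
power series is `1 + ∑ n (aₙ - bₙ) zⁿ`, has positive real part on the unit disc. So the claim is
Carathéodory's coefficient bound `|dₙ| ≤ 2 Re d₀` for a power series `p = ∑ dₙ zⁿ` with
nonnegative real part. On the circle `|z| = r < 1` the Cauchy formula gives `dₙ` as the average
of `z⁻ⁿ p`, while the average of `z⁻ⁿ conj p` vanishes for `n ≥ 1`. Adding the two, `dₙ` is the
average of `z⁻ⁿ · 2 Re p`, whose modulus is at most `r⁻ⁿ` times the average of `2 Re p`, that is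
`2 r⁻ⁿ Re d₀`. Let `r → 1`. -/

open Complex ComplexConjugate Metric Set Filter Topology FormalMultilinearSeries Real

theorem norm_circleAverage_le {E : Type*} [NormedAddCommGroup E] [NormedSpace ℝ E]
    (f : ℂ → E) (c : ℂ) (R : ℝ) :
    ‖circleAverage f c R‖ ≤ circleAverage (fun z => ‖f z‖) c R := by
  rw [circleAverage, circleAverage, norm_smul, smul_eq_mul, Real.norm_of_nonneg (by positivity)]
  gcongr
  exact intervalIntegral.norm_integral_le_integral_norm Real.two_pi_pos.le

theorem circleIntegrable_inv_pow_mul {q : ℂ → ℂ} {r : ℝ} (hr : r ≠ 0)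
    (hq : ContinuousOn q (sphere 0 |r|)) (n : ℕ) :
    CircleIntegrable (fun z => (z ^ n)⁻¹ * q z) 0 r := by
  refine ContinuousOn.circleIntegrable' (ContinuousOn.mul ?_ hq)
  refine (continuousOn_pow n).inv₀ fun z hz => pow_ne_zero n ?_
  rintro rfl
  simp [eq_comm (a := (0 : ℝ)), hr] at hz

theorem circleAverage_pow_mul_eq_zero {p : ℂ → ℂ} {r : ℝ}
    (hp : DifferentiableOn ℂ p (closedBall 0 |r|)) {n : ℕ} (hn : n ≠ 0) :
    circleAverage (fun z => z ^ n * p z) 0 r = 0 := by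
  have : DiffContOnCl ℂ (fun z => z ^ n * p z) (ball 0 |r|) :=
    ((differentiableOn_pow n).mul hp).diffContOnCl_ball subset_rfl
  simp [this.circleAverage, hn]

theorem circleAverage_inv_pow_mul_conj_eq_zero {p : ℂ → ℂ} {r : ℝ} (hr : 0 < r)
    (hp : DifferentiableOn ℂ p (closedBall 0 r)) {n : ℕ} (hn : n ≠ 0) :
    circleAverage (fun z => (z ^ n)⁻¹ * conj (p z)) 0 r = 0 := by
  have hint : CircleIntegrable (fun z => (z ^ n)⁻¹ * conj (p z)) 0 r := by
    refine circleIntegrable_inv_pow_mul hr.ne' (continuous_conj.comp_continuousOn ?_) n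
    rw [abs_of_pos hr]
    exact hp.continuousOn.mono sphere_subset_closedBall
  -- on the circle `conj z = r ^ 2 / z`, so conjugation turns the integrand into a holomorphic one
  have hconj : EqOn (conjCLE.toContinuousLinearMap ∘ fun z => (z ^ n)⁻¹ * conj (p z))
      (fun z => (((r : ℂ) ^ 2) ^ n)⁻¹ • (z ^ n * p z)) (sphere 0 |r|) := by
    intro z hz
    have hnorm : ‖z‖ = r := by simpa [abs_of_pos hr] using hz
    have hz0 : z ≠ 0 := by rintro rfl; simp [hr.ne] at hnorm
    have : conj z = r ^ 2 * z⁻¹ := by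
      rw [eq_mul_inv_iff_mul_eq₀ hz0, mul_comm, mul_conj, normSq_eq_norm_sq, hnorm]; push_cast; ring
    have hconj_z : conj ((z ^ n)⁻¹ * conj (p z)) = (((r : ℂ) ^ 2) ^ n)⁻¹ * (z ^ n * p z) := by
      rw [map_mul, map_inv₀, map_pow, conj_conj, this, mul_pow, inv_pow, mul_inv, inv_inv]
      ring
    simpa using hconj_z
  have := conjCLE.toContinuousLinearMap.circleAverage_comp_comm hint
  rw [circleAverage_congr_sphere hconj, circleAverage_fun_smul,
    circleAverage_pow_mul_eq_zero (by rwa [abs_of_pos hr]) hn, smul_zero] at this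
  simpa using this.symm

theorem HasFPowerSeriesAt.circleAverage_inv_pow_mul_eq_coeff {p : ℂ → ℂ} {d : ℕ → ℂ} {r : ℝ}
    (hp : HasFPowerSeriesAt p (ofScalars ℂ d) 0) (hd : DifferentiableOn ℂ p (closedBall 0 r))
    (hr : 0 < r) (n : ℕ) :
    circleAverage (fun z => (z ^ n)⁻¹ * p z) 0 r = d n := by
  lift r to NNReal using hr.le
  have hcauchy := hp.eq_formalMultilinearSeries (hd.hasFPowerSeriesOnBall hr).hasFPowerSeriesAt
  have := congrArg (fun q : FormalMultilinearSeries ℂ ℂ ℂ => q n fun _ => 1) hcauchy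
  simp only [ofScalars_apply_eq, cauchyPowerSeries_apply] at this
  rw [circleAverage_eq_circleIntegral hr.ne']
  simpa [smul_eq_mul, mul_left_comm] using this.symm

theorem HasFPowerSeriesAt.norm_coeff_mul_pow_le_two_mul_re {p : ℂ → ℂ} {d : ℕ → ℂ} {r : ℝ}
    (hp : HasFPowerSeriesAt p (ofScalars ℂ d) 0) (hd : DifferentiableOn ℂ p (closedBall 0 r))
    (hr : 0 < r) (hre : ∀ z ∈ sphere (0 : ℂ) r, 0 ≤ (p z).re) {n : ℕ} (hn : n ≠ 0) :
    ‖d n‖ * r ^ n ≤ 2 * (d 0).re := by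
  have hcont : ContinuousOn p (sphere 0 |r|) := by
    rw [abs_of_pos hr]
    exact hd.continuousOn.mono sphere_subset_closedBall
  have hcont' : ContinuousOn (fun z => conj (p z)) (sphere 0 |r|) :=
    continuous_conj.comp_continuousOn hcont
  have hsplit : d n = circleAverage (fun z => (z ^ n)⁻¹ * (2 * (p z).re : ℂ)) 0 r :=
    calc d n = circleAverage (fun z => (z ^ n)⁻¹ * p z) 0 r
          + circleAverage (fun z => (z ^ n)⁻¹ * conj (p z)) 0 r := by
          rw [hp.circleAverage_inv_pow_mul_eq_coeff hd hr n,
            circleAverage_inv_pow_mul_conj_eq_zero hr hd hn, add_zero]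
      _ = _ := by
          rw [← circleAverage_fun_add (circleIntegrable_inv_pow_mul hr.ne' hcont n)
            (circleIntegrable_inv_pow_mul hr.ne' hcont' n)]
          simp only [← mul_add, add_conj]
          push_cast
          rfl
  have hnorm : EqOn (fun z => ‖(z ^ n)⁻¹ * (2 * (p z).re : ℂ)‖)
      (fun z => (r ^ n)⁻¹ • (2 * (p z).re)) (sphere 0 |r|) := by
    intro z hz
    rw [abs_of_pos hr] at hz
    have hz' : ‖z‖ = r := by simpa using hz
    simp [hz', abs_of_nonneg (hre z hz)]
  have hre_mean : circleAverage (fun z => (p z).re) 0 r = (d 0).re := by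
    have hmean : circleAverage p 0 r = d 0 := by
      simpa using hp.circleAverage_inv_pow_mul_eq_coeff hd hr 0
    rw [← hmean]
    exact reCLM.circleAverage_comp_comm hcont.circleIntegrable'
  calc ‖d n‖ * r ^ n
      ≤ circleAverage (fun z => ‖(z ^ n)⁻¹ * (2 * (p z).re : ℂ)‖) 0 r * r ^ n := by
        rw [hsplit]; gcongr; exact norm_circleAverage_le _ _ _
    _ = 2 * (d 0).re := by
        rw [circleAverage_congr_sphere hnorm, circleAverage_fun_smul,
          show (fun z => 2 * (p z).re) = fun z => (2 : ℝ) • (p z).re from rfl,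
          circleAverage_fun_smul, hre_mean, smul_eq_mul, smul_eq_mul]
        field_simp

theorem Metric.eball_one_eq_ball {α : Type*} [PseudoMetricSpace α] (x : α) :
    eball x 1 = ball x 1 := by
  rw [← ENNReal.ofReal_one, Metric.eball_ofReal]

theorem HasFPowerSeriesOnBall.norm_coeff_le_two_mul_re {p : ℂ → ℂ} {d : ℕ → ℂ}
    (hp : HasFPowerSeriesOnBall p (ofScalars ℂ d) 0 1) (hre : ∀ z ∈ ball (0 : ℂ) 1, 0 ≤ (p z).re)
    {n : ℕ} (hn : n ≠ 0) : ‖d n‖ ≤ 2 * (d 0).re := by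
  have hdiff : DifferentiableOn ℂ p (ball 0 1) := eball_one_eq_ball (0 : ℂ) ▸ hp.differentiableOn
  have hbound : ∀ r ∈ Ioo (0 : ℝ) 1, ‖d n‖ * r ^ n ≤ 2 * (d 0).re := fun r ⟨hr0, hr1⟩ =>
    hp.hasFPowerSeriesAt.norm_coeff_mul_pow_le_two_mul_re
      (hdiff.mono (closedBall_subset_ball hr1)) hr0
      (fun z hz => hre z (closedBall_subset_ball hr1 (sphere_subset_closedBall hz))) hn
  have hlim : Tendsto (fun r : ℝ => ‖d n‖ * r ^ n) (𝓝[<] 1) (𝓝 ‖d n‖) := by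
    refine ((by fun_prop : Continuous fun r : ℝ => ‖d n‖ * r ^ n).tendsto' 1 _ ?_).mono_left
      nhdsWithin_le_nhds
    simp
  exact le_of_tendsto hlim (eventually_of_mem (Ioo_mem_nhdsLT zero_lt_one) hbound)

theorem hasFPowerSeriesOnBall_ofScalars_of_hasSum {c : ℕ → ℂ} {f : ℂ → ℂ} {R : ENNReal}
    (hR : 0 < R) (hf : ∀ z ∈ eball (0 : ℂ) R, HasSum (fun n => c n * z ^ n) (f z)) :
    HasFPowerSeriesOnBall f (ofScalars ℂ c) 0 R where
  r_le := by
    refine ENNReal.le_of_forall_nnreal_lt fun r hr => le_radius_of_tendsto _ (l := 0) ?_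
    have := (hf r (by simpa [← ofReal_norm] using hr)).summable.tendsto_atTop_zero.norm
    simpa [ofScalars_norm] using this
  r_pos := hR
  hasSum hy := by simpa [ofScalars_apply_eq, mul_comm] using hf _ hy

theorem HasFPowerSeriesOnBall.hasSum_mul_deriv {c : ℕ → ℂ} {f : ℂ → ℂ} {R : ENNReal}
    (hf : HasFPowerSeriesOnBall f (ofScalars ℂ c) 0 R) {z : ℂ} (hz : z ∈ eball (0 : ℂ) R) :
    HasSum (fun n => n * c n * z ^ n) (z * deriv f z) := by
  have h := (hf.fderiv.hasSum hz).mapL (ContinuousLinearMap.apply ℂ ℂ z)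
  simp only [ContinuousLinearMap.apply_apply, derivSeries_apply_diag, ofScalars_apply_eq, zero_add,
    fderiv_eq_smul_deriv, smul_eq_mul, nsmul_eq_mul] at h
  rw [← hasSum_nat_add_iff' 1]
  simpa [mul_assoc, mul_left_comm] using h

theorem hasSum_update_zero_mul_pow {c : ℕ → ℂ} {z s : ℂ}
    (h : HasSum (fun n => c (n + 1) * z ^ (n + 1)) s) :
    HasSum (fun n => Function.update c 0 0 n * z ^ n) s := by
  rw [← hasSum_nat_add_iff' 1]
  simpa using h

theorem logDeriv_cexp_comp {F : ℂ → ℂ} {z : ℂ} (hF : DifferentiableAt ℂ F z) :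
    logDeriv (fun w => exp (F w)) z = deriv F z := by
  rw [logDeriv_apply, hF.hasDerivAt.cexp.deriv, mul_div_cancel_left₀ _ (Complex.exp_ne_zero _)]

theorem stmt_4 (a b : ℕ → ℂ) (H G h g : ℂ → ℂ)
    (hH : ∀ z ∈ ball (0 : ℂ) 1, HasSum (fun n : ℕ => a (n + 1) * z ^ (n + 1)) (H z))
    (hG : ∀ z ∈ ball (0 : ℂ) 1, HasSum (fun n : ℕ => b (n + 1) * z ^ (n + 1)) (G z))
    (hh : ∀ z, h z = Complex.exp (H z))
    (hg : ∀ z, g z = Complex.exp (G z))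
    (hstar : ∀ z ∈ ball (0 : ℂ) 1,
        0 < (1 + z * deriv h z / h z - z * deriv g z / g z).re) :
    ∀ n : ℕ, 1 ≤ n → ‖a n - b n‖ ≤ 2 / n := by
  obtain rfl : h = fun z => exp (H z) := funext hh
  obtain rfl : g = fun z => exp (G z) := funext hg
  have hHser := hasFPowerSeriesOnBall_ofScalars_of_hasSum one_pos fun z hz =>
    hasSum_update_zero_mul_pow (hH z (eball_one_eq_ball (0 : ℂ) ▸ hz))
  have hGser := hasFPowerSeriesOnBall_ofScalars_of_hasSum one_pos fun z hz =>
    hasSum_update_zero_mul_pow (hG z (eball_one_eq_ball (0 : ℂ) ▸ hz))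
  set p : ℂ → ℂ := fun z => 1 + z * deriv H z - z * deriv G z
  set d : ℕ → ℂ := fun n => if n = 0 then 1 else n * (a n - b n)
  have hp : HasFPowerSeriesOnBall p (ofScalars ℂ d) 0 1 :=
    hasFPowerSeriesOnBall_ofScalars_of_hasSum one_pos fun z hz => by
      have := (hasSum_ite_eq 0 1).add
        ((hHser.hasSum_mul_deriv hz).sub (hGser.hasSum_mul_deriv hz))
      rw [← add_sub_assoc] at this
      refine this.congr_fun fun n => ?_
      by_cases hn : n = 0
      · simp [hn, d]
      · rw [if_neg hn, Function.update_of_ne hn, Function.update_of_ne hn]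
        simp only [d, if_neg hn]
        ring
  have hre : ∀ z ∈ ball (0 : ℂ) 1, 0 ≤ (p z).re := fun z hz => by
    have hz' : z ∈ eball (0 : ℂ) 1 := (eball_one_eq_ball (0 : ℂ)).symm ▸ hz
    have := (hstar z hz).le
    rwa [mul_div_assoc, mul_div_assoc, ← logDeriv_apply, ← logDeriv_apply,
      logDeriv_cexp_comp (hHser.analyticAt_of_mem hz').differentiableAt,
      logDeriv_cexp_comp (hGser.analyticAt_of_mem hz').differentiableAt] at this
  intro n hn
  have hn0 : n ≠ 0 := by omega
  have hbound := hp.norm_coeff_le_two_mul_re hre hn0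
  simp only [d, hn0, ↓reduceIte, one_re, mul_one, norm_mul, Complex.norm_natCast] at hbound
  rwa [le_div_iff₀ (by positivity), mul_comm]
end

section
/- Let μ be analytic on the open unit disk 𝔻 with μ(0) = 0 and |μ(z)| < 1 for all z ∈ 𝔻. Let g be analytic and nonvanishing on 𝔻 with g(0) = 1, and suppose that z·g′(z)·(1 − μ(z))·(1 − z) = μ(z)·g(z) for all z ∈ 𝔻. Then |g(z)| ≤ exp(|z|/(1 − |z|)) for all z ∈ 𝔻. -/
/-!
By the Schwarz lemma `‖μ w‖ ≤ ‖w‖`, so the differential equation gives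
`‖g' w‖ ≤ ‖g w‖ / (1 - ‖w‖)²` (first off the origin, then at `0` by continuity). Along the
ray `t ↦ g (t z)` this is a Gronwall inequality with coefficient `r / (1 - t r)²`, the derivative
of `t r / (1 - t r)`, where `r = ‖z‖`; integrating from `0` to `1` gives the bound.
-/

open Complex Metric Set Filter Topology

theorem norm_le_mul_exp_of_norm_deriv_le_mul_norm {E : Type*} [NormedAddCommGroup E]
    [NormedSpace ℝ E] {f f' : ℝ → E} {Φ K : ℝ → ℝ} {a b : ℝ}
    (hf : ContinuousOn f (Icc a b)) (hf' : ∀ x ∈ Ico a b, HasDerivWithinAt f (f' x) (Ici x) x)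
    (hΦ : ContinuousOn Φ (Icc a b)) (hΦ' : ∀ x ∈ Ico a b, HasDerivWithinAt Φ (K x) (Ici x) x)
    (bound : ∀ x ∈ Ico a b, ‖f' x‖ ≤ K x * ‖f x‖) :
    ∀ x ∈ Icc a b, ‖f x‖ ≤ ‖f a‖ * Real.exp (Φ x - Φ a) := by
  intro x hx
  -- the comparison theorem needs strict slack: perturb the barrier by `ε`, then let `ε → 0`
  set B : ℝ → ℝ → ℝ := fun ε t => (‖f a‖ + ε) * Real.exp (Φ t - Φ a + ε * (t - a))
  have hB : ∀ ε > 0, ‖f x‖ ≤ B ε x := by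
    intro ε hε
    refine image_norm_le_of_norm_deriv_right_lt_deriv_boundary' (B' := fun t => (K t + ε) * B ε t)
      hf hf' ?_ ?_ ?_ ?_ hx
    · simpa only [B, sub_self, mul_zero, add_zero, Real.exp_zero, mul_one,
        le_add_iff_nonneg_right] using hε.le
    · unfold B; fun_prop
    · intro t ht
      have := (((hΦ' t ht).sub_const (Φ a)).add
        (((hasDerivWithinAt_id t _).sub_const a).const_mul ε)).exp.const_mul (‖f a‖ + ε)
      exact this.congr_deriv (by simp only [B, Pi.add_apply, id]; ring)
    · intro t ht hft
      have hBpos : 0 < B ε t := by positivity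
      calc ‖f' t‖ ≤ K t * ‖f t‖ := bound t ht
        _ = K t * B ε t := by rw [hft]
        _ < (K t + ε) * B ε t := by nlinarith
  have hlim : Tendsto (fun ε => B ε x) (𝓝[>] 0) (𝓝 (‖f a‖ * Real.exp (Φ x - Φ a))) := by
    have : Continuous (fun ε => B ε x) := by unfold B; fun_prop
    simpa [B] using (this.tendsto 0).mono_left nhdsWithin_le_nhds
  exact ge_of_tendsto hlim (eventually_mem_nhdsWithin.mono hB)

theorem norm_le_of_mul_one_sub_mul_one_sub_eq {w d m G : ℂ} (hw0 : w ≠ 0) (hw1 : ‖w‖ < 1)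
    (hm : ‖m‖ ≤ ‖w‖) (h : w * d * (1 - m) * (1 - w) = m * G) :
    ‖d‖ ≤ ‖G‖ / (1 - ‖w‖) ^ 2 := by
  have hw : 0 < ‖w‖ := norm_pos_iff.mpr hw0
  have hnorm : ‖w‖ * ‖d‖ * ‖1 - m‖ * ‖1 - w‖ = ‖m‖ * ‖G‖ := by
    simpa only [norm_mul] using congrArg norm h
  have hm' : 1 - ‖w‖ ≤ ‖1 - m‖ := by
    have := norm_sub_norm_le (1 : ℂ) m; rw [norm_one] at this; linarith
  have hw' : 1 - ‖w‖ ≤ ‖1 - w‖ := by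
    have := norm_sub_norm_le (1 : ℂ) w; rw [norm_one] at this; linarith
  rw [le_div_iff₀ (by nlinarith)]
  refine le_of_mul_le_mul_left ?_ hw
  calc ‖w‖ * (‖d‖ * (1 - ‖w‖) ^ 2) ≤ ‖w‖ * ‖d‖ * ‖1 - m‖ * ‖1 - w‖ := by
        rw [sq, ← mul_assoc, ← mul_assoc]
        gcongr
    _ = ‖m‖ * ‖G‖ := hnorm
    _ ≤ ‖w‖ * ‖G‖ := by gcongr

theorem norm_deriv_le_of_mul_deriv_eq {μ g : ℂ → ℂ} (hμd : DifferentiableOn ℂ μ (ball 0 1))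
    (hμ0 : μ 0 = 0) (hμlt : ∀ z ∈ ball (0 : ℂ) 1, ‖μ z‖ < 1)
    (hgd : DifferentiableOn ℂ g (ball 0 1))
    (heq : ∀ z ∈ ball (0 : ℂ) 1, z * deriv g z * (1 - μ z) * (1 - z) = μ z * g z) :
    ∀ w ∈ ball (0 : ℂ) 1, ‖deriv g w‖ ≤ ‖g w‖ / (1 - ‖w‖) ^ 2 := by
  have hpunct : ∀ w ∈ ball (0 : ℂ) 1, w ≠ 0 → ‖deriv g w‖ ≤ ‖g w‖ / (1 - ‖w‖) ^ 2 := by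
    intro w hw hw0
    have hw1 : ‖w‖ < 1 := mem_ball_zero_iff.mp hw
    have hschwarz : ‖μ w‖ ≤ ‖w‖ := norm_le_norm_of_mapsTo_ball hμd
      (fun x hx => mem_closedBall_zero_iff.mpr (hμlt x hx).le) hμ0 hw1
    exact norm_le_of_mul_one_sub_mul_one_sub_eq hw0 hw1 hschwarz (heq w hw)
  intro w hw
  rcases ne_or_eq w 0 with hw0 | rfl
  · exact hpunct w hw hw0
  -- at the origin the equation is `0 = 0`; the bound passes to the limit from the punctured disk
  have hnhds : ball (0 : ℂ) 1 ∈ 𝓝 0 := ball_mem_nhds 0 one_pos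
  have hderiv : ContinuousAt (fun w => ‖deriv g w‖) 0 :=
    ((hgd.deriv isOpen_ball).continuousOn.continuousAt hnhds).norm
  have hbound : ContinuousAt (fun w => ‖g w‖ / (1 - ‖w‖) ^ 2) 0 := by
    have := (hgd.continuousOn.continuousAt hnhds).norm
    exact this.div (by fun_prop) (by simp)
  refine le_of_tendsto_of_tendsto (b := 𝓝[≠] (0 : ℂ)) (hderiv.tendsto.mono_left nhdsWithin_le_nhds)
    (hbound.tendsto.mono_left nhdsWithin_le_nhds) ?_
  filter_upwards [inter_mem_nhdsWithin {0}ᶜ hnhds] with w hw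
  exact hpunct w hw.2 hw.1

theorem norm_le_mul_exp_of_norm_deriv_le {g : ℂ → ℂ} (hgd : DifferentiableOn ℂ g (ball 0 1))
    (hg' : ∀ w ∈ ball (0 : ℂ) 1, ‖deriv g w‖ ≤ ‖g w‖ / (1 - ‖w‖) ^ 2) {z : ℂ}
    (hz : z ∈ ball (0 : ℂ) 1) :
    ‖g z‖ ≤ ‖g 0‖ * Real.exp (‖z‖ / (1 - ‖z‖)) := by
  set r := ‖z‖
  have hr1 : r < 1 := mem_ball_zero_iff.mp hz
  have hseg : ∀ t ∈ Icc (0 : ℝ) 1, (t : ℂ) * z ∈ ball (0 : ℂ) 1 := by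
    intro t ht
    rw [mem_ball_zero_iff, norm_mul, Complex.norm_real, Real.norm_of_nonneg ht.1]
    nlinarith [norm_nonneg z, ht.2]
  have hpos : ∀ t ∈ Icc (0 : ℝ) 1, 0 < 1 - t * r := fun t ht => by nlinarith [norm_nonneg z, ht.2]
  have hray : ∀ t ∈ Icc (0 : ℝ) 1,
      HasDerivAt (fun s : ℝ => g (s * z)) (z * deriv g (t * z)) t := by
    intro t ht
    have hg := (hgd.differentiableAt (isOpen_ball.mem_nhds (hseg t ht))).hasDerivAt
    simpa [mul_comm] using (hg.comp (t : ℂ) ((hasDerivAt_id (t : ℂ)).mul_const z)).comp_ofReal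
  have hΦ : ∀ t ∈ Icc (0 : ℝ) 1,
      HasDerivAt (fun s => s * r / (1 - s * r)) (r / (1 - t * r) ^ 2) t := by
    intro t ht
    have := ((hasDerivAt_id t).mul_const r).div (((hasDerivAt_id t).mul_const r).const_sub 1)
      (hpos t ht).ne'
    exact this.congr_deriv (by simp only [id]; field_simp; ring)
  have key := norm_le_mul_exp_of_norm_deriv_le_mul_norm (a := 0) (b := 1)
    (f := fun s : ℝ => g (s * z)) (Φ := fun s => s * r / (1 - s * r))
    (fun t ht => (hray t ht).continuousAt.continuousWithinAt)
    (fun t ht => (hray t (Ico_subset_Icc_self ht)).hasDerivWithinAt)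
    (fun t ht => (hΦ t ht).continuousAt.continuousWithinAt)
    (fun t ht => (hΦ t (Ico_subset_Icc_self ht)).hasDerivWithinAt) ?_
    1 (right_mem_Icc.mpr zero_le_one)
  · simpa using key
  intro t ht
  have ht' := Ico_subset_Icc_self ht
  have hnorm : ‖(t : ℂ) * z‖ = t * r := by
    rw [norm_mul, Complex.norm_real, Real.norm_of_nonneg ht.1]
  calc ‖z * deriv g (t * z)‖ = r * ‖deriv g (t * z)‖ := norm_mul _ _
    _ ≤ r * (‖g (t * z)‖ / (1 - t * r) ^ 2) := by
        gcongr; rw [← hnorm]; exact hg' _ (hseg t ht')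
    _ = r / (1 - t * r) ^ 2 * ‖g (t * z)‖ := by ring

theorem stmt_6_general (μ g : ℂ → ℂ)
    (hμd : DifferentiableOn ℂ μ (ball (0 : ℂ) 1))
    (hμ0 : μ 0 = 0)
    (hμlt : ∀ z ∈ ball (0 : ℂ) 1, ‖μ z‖ < 1)
    (hgd : DifferentiableOn ℂ g (ball (0 : ℂ) 1))
    (hg0 : g 0 = 1)
    (heq : ∀ z ∈ ball (0 : ℂ) 1, z * deriv g z * (1 - μ z) * (1 - z) = μ z * g z) :
    ∀ z ∈ ball (0 : ℂ) 1,
      ‖g z‖ ≤ Real.exp (‖z‖ / (1 - ‖z‖)) := by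
  intro z hz
  simpa [hg0] using norm_le_mul_exp_of_norm_deriv_le hgd
    (norm_deriv_le_of_mul_deriv_eq hμd hμ0 hμlt hgd heq) hz

theorem stmt_6 (μ g : ℂ → ℂ)
    (hμd : DifferentiableOn ℂ μ (ball (0 : ℂ) 1))
    (hμ0 : μ 0 = 0)
    (hμlt : ∀ z ∈ ball (0 : ℂ) 1, ‖μ z‖ < 1)
    (hgd : DifferentiableOn ℂ g (ball (0 : ℂ) 1))
    (hgne : ∀ z ∈ ball (0 : ℂ) 1, g z ≠ 0)
    (hg0 : g 0 = 1)
    (heq : ∀ z ∈ ball (0 : ℂ) 1, z * deriv g z * (1 - μ z) * (1 - z) = μ z * g z) :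
    ∀ z ∈ ball (0 : ℂ) 1,
      ‖g z‖ ≤ Real.exp (‖z‖ / (1 - ‖z‖)) :=
  stmt_6_general μ g hμd hμ0 hμlt hgd hg0 heq
end

section
/- Let μ be analytic on the open unit disk 𝔻 with μ(0) = 0 and |μ(z)| < 1 for all z ∈ 𝔻. Let g be analytic and nonvanishing on 𝔻 with g(0) = 1, and suppose that z·g′(z)·(1 − μ(z))·(1 − z) = μ(z)·g(z) for all z ∈ 𝔻. Define h(z) = g(z)/(1 − z). Then |h(z)| ≤ (1/(1 − |z|))·exp(|z|/(1 − |z|)) for all z ∈ 𝔻. -/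
/-!
By the Schwarz lemma `‖μ w‖ ≤ ‖w‖`, so taking norms in the differential equation and using
`‖1 - μ w‖, ‖1 - w‖ ≥ 1 - ‖w‖` gives `‖g' w‖ (1 - ‖w‖)² ≤ ‖g w‖`. Along the radius `t ↦ t z` this
is a Grönwall inequality with coefficient `‖z‖ / (1 - t ‖z‖)²`, whose integral over `[0, 1]` is
`‖z‖ / (1 - ‖z‖)`; hence `‖g z‖ ≤ exp (‖z‖ / (1 - ‖z‖))`, and `‖1 - z‖ ≥ 1 - ‖z‖` finishes.
-/

open Complex Metric Set

theorem norm_le_mul_exp_of_norm_deriv_le_s7 {F : Type*} [NormedAddCommGroup F]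
    [InnerProductSpace ℝ F] {f f' : ℝ → F} {Φ Φ' : ℝ → ℝ} {a b : ℝ} (hab : a ≤ b)
    (hf : ContinuousOn f (Icc a b)) (hΦ : ContinuousOn Φ (Icc a b))
    (hf' : ∀ t ∈ Ioo a b, HasDerivAt f (f' t) t) (hΦ' : ∀ t ∈ Ioo a b, HasDerivAt Φ (Φ' t) t)
    (bound : ∀ t ∈ Ioo a b, ‖f' t‖ ≤ Φ' t * ‖f t‖) :
    ‖f b‖ ≤ ‖f a‖ * Real.exp (Φ b - Φ a) := by
  -- `‖f‖ ^ 2` rather than `log ‖f‖`, so that zeros of `f` cause no trouble.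
  set ψ : ℝ → ℝ := fun t ↦ ‖f t‖ ^ 2 * Real.exp (-2 * Φ t)
  have hψ' : ∀ t ∈ Ioo a b, HasDerivAt ψ
      ((2 * inner ℝ (f t) (f' t) - 2 * Φ' t * ‖f t‖ ^ 2) * Real.exp (-2 * Φ t)) t := by
    intro t ht
    exact ((hf' t ht).norm_sq.fun_mul ((hΦ' t ht).const_mul (-2)).exp).congr_deriv (by ring)
  have hψ_anti : AntitoneOn ψ (Icc a b) := by
    refine antitoneOn_of_deriv_nonpos (convex_Icc a b)
      ((hf.norm.pow 2).mul (continuousOn_const.mul hΦ).rexp) ?_ ?_ <;> rw [interior_Icc]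
    · exact fun t ht ↦ (hψ' t ht).differentiableAt.differentiableWithinAt
    · intro t ht
      rw [(hψ' t ht).deriv]
      have hinner : inner ℝ (f t) (f' t) ≤ Φ' t * ‖f t‖ ^ 2 := calc
        inner ℝ (f t) (f' t) ≤ ‖f t‖ * ‖f' t‖ := real_inner_le_norm _ _
        _ ≤ ‖f t‖ * (Φ' t * ‖f t‖) := by gcongr; exact bound t ht
        _ = Φ' t * ‖f t‖ ^ 2 := by ring
      exact mul_nonpos_of_nonpos_of_nonneg (by linarith) (Real.exp_pos _).le
  have hψ_le : ψ b ≤ ψ a := hψ_anti ⟨le_rfl, hab⟩ ⟨hab, le_rfl⟩ hab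
  refine (pow_le_pow_iff_left₀ (norm_nonneg _) (by positivity) two_ne_zero).1 ?_
  calc ‖f b‖ ^ 2 = ψ b * Real.exp (2 * Φ b) := by
        simp only [ψ, mul_assoc, ← Real.exp_add]; simp
    _ ≤ ψ a * Real.exp (2 * Φ b) := by gcongr
    _ = (‖f a‖ * Real.exp (Φ b - Φ a)) ^ 2 := by
        simp only [ψ, mul_pow, ← Real.exp_nat_mul, mul_assoc, ← Real.exp_add]; ring_nf

theorem norm_mul_one_sub_norm_sq_le_of_mul_eq {w d m G : ℂ} (hw0 : w ≠ 0) (hw1 : ‖w‖ < 1)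
    (hm : ‖m‖ ≤ ‖w‖) (heq : w * d * (1 - m) * (1 - w) = m * G) :
    ‖d‖ * (1 - ‖w‖) ^ 2 ≤ ‖G‖ := by
  have h1m : 1 - ‖w‖ ≤ ‖1 - m‖ := by
    linarith [show 1 - ‖m‖ ≤ ‖1 - m‖ by simpa using norm_sub_norm_le (1 : ℂ) m]
  have h1w : 1 - ‖w‖ ≤ ‖1 - w‖ := by simpa using norm_sub_norm_le (1 : ℂ) w
  have hnorm : ‖w‖ * (‖d‖ * ‖1 - m‖ * ‖1 - w‖) = ‖m‖ * ‖G‖ := by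
    simpa only [norm_mul, mul_assoc] using congrArg (‖·‖) heq
  have hdG : ‖d‖ * ‖1 - m‖ * ‖1 - w‖ ≤ ‖G‖ :=
    le_of_mul_le_mul_left (hnorm.trans_le (by gcongr)) (norm_pos_iff.2 hw0)
  calc ‖d‖ * (1 - ‖w‖) ^ 2 = ‖d‖ * (1 - ‖w‖) * (1 - ‖w‖) := by ring
    _ ≤ ‖d‖ * ‖1 - m‖ * ‖1 - w‖ := by gcongr
    _ ≤ ‖G‖ := hdG

theorem norm_le_mul_exp_of_norm_deriv_mul_sq_le {g : ℂ → ℂ}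
    (hg : DifferentiableOn ℂ g (ball 0 1))
    (hbound : ∀ w ∈ ball (0 : ℂ) 1, w ≠ 0 → ‖deriv g w‖ * (1 - ‖w‖) ^ 2 ≤ ‖g w‖)
    {z : ℂ} (hz : z ∈ ball (0 : ℂ) 1) :
    ‖g z‖ ≤ ‖g 0‖ * Real.exp (‖z‖ / (1 - ‖z‖)) := by
  set r := ‖z‖
  have hr : r < 1 := mem_ball_zero_iff.1 hz
  have hnorm : ∀ t ∈ Icc (0 : ℝ) 1, ‖(t : ℂ) * z‖ = t * r := fun t ht ↦ by
    rw [norm_mul, norm_real, Real.norm_of_nonneg ht.1]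
  have htr : ∀ t ∈ Icc (0 : ℝ) 1, t * r < 1 := fun t ht ↦
    (mul_le_of_le_one_left (norm_nonneg z) ht.2).trans_lt hr
  have hmem : ∀ t ∈ Icc (0 : ℝ) 1, (t : ℂ) * z ∈ ball (0 : ℂ) 1 := fun t ht ↦ by
    rw [mem_ball_zero_iff, hnorm t ht]; exact htr t ht
  have hf : ∀ t ∈ Icc (0 : ℝ) 1,
      HasDerivAt (fun t : ℝ ↦ g (t * z)) (deriv g (t * z) * z) t := fun t ht ↦ by
    have hgt := (hg.differentiableAt (isOpen_ball.mem_nhds (hmem t ht))).hasDerivAt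
    simpa using (hgt.comp (t : ℂ) ((hasDerivAt_id _).mul_const z)).comp_ofReal
  have hΦ : ∀ t ∈ Icc (0 : ℝ) 1,
      HasDerivAt (fun t : ℝ ↦ (1 - t * r)⁻¹) (r / (1 - t * r) ^ 2) t := fun t ht ↦ by
    have h := (((hasDerivAt_id t).mul_const r).const_sub 1).inv (sub_pos.2 (htr t ht)).ne'
    exact h.congr_deriv (by simp)
  have hgrowth : ∀ t ∈ Ioo (0 : ℝ) 1,
      ‖deriv g (t * z) * z‖ ≤ r / (1 - t * r) ^ 2 * ‖g (t * z)‖ := by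
    intro t ht
    rcases eq_or_ne z 0 with rfl | hz0
    · simp only [mul_zero, norm_zero]
      positivity
    have hw := hbound _ (hmem t (Ioo_subset_Icc_self ht))
      (mul_ne_zero (ofReal_ne_zero.2 ht.1.ne') hz0)
    rw [hnorm t (Ioo_subset_Icc_self ht)] at hw
    have hpos : 0 < 1 - t * r := by linarith [htr t (Ioo_subset_Icc_self ht)]
    rw [norm_mul, div_mul_eq_mul_div, le_div_iff₀ (by positivity)]
    nlinarith [norm_nonneg z]
  have key := norm_le_mul_exp_of_norm_deriv_le_s7 zero_le_one (HasDerivAt.continuousOn hf)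
    (HasDerivAt.continuousOn hΦ) (fun t ht ↦ hf t (Ioo_subset_Icc_self ht))
    (fun t ht ↦ hΦ t (Ioo_subset_Icc_self ht)) hgrowth
  have hΦ_diff : (1 - r)⁻¹ - 1 = r / (1 - r) := by
    field_simp [(by linarith : 1 - r ≠ 0)]; ring
  simpa [hΦ_diff] using key

theorem stmt_7_general (μ g h : ℂ → ℂ)
    (hμd : DifferentiableOn ℂ μ (ball (0 : ℂ) 1))
    (hμ0 : μ 0 = 0)
    (hμlt : ∀ z ∈ ball (0 : ℂ) 1, ‖μ z‖ < 1)
    (hgd : DifferentiableOn ℂ g (ball (0 : ℂ) 1))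
    (hg0 : g 0 = 1)
    (heq : ∀ z ∈ ball (0 : ℂ) 1, z * deriv g z * (1 - μ z) * (1 - z) = μ z * g z)
    (hh : ∀ z, h z = g z / (1 - z)) :
    ∀ z ∈ ball (0 : ℂ) 1,
      ‖h z‖ ≤
        (1 / (1 - ‖z‖)) * Real.exp (‖z‖ / (1 - ‖z‖)) := by
  intro z hz
  have hschwarz : ∀ w ∈ ball (0 : ℂ) 1, ‖μ w‖ ≤ ‖w‖ := fun w hw ↦
    norm_le_norm_of_mapsTo_ball hμd (fun x hx ↦ mem_closedBall_zero_iff.2 (hμlt x hx).le) hμ0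
      (mem_ball_zero_iff.1 hw)
  have hg : ‖g z‖ ≤ Real.exp (‖z‖ / (1 - ‖z‖)) := by
    simpa [hg0] using norm_le_mul_exp_of_norm_deriv_mul_sq_le hgd (fun w hw hw0 ↦
      norm_mul_one_sub_norm_sq_le_of_mul_eq hw0 (mem_ball_zero_iff.1 hw) (hschwarz w hw) (heq w hw)) hz
  have h1z : 1 - ‖z‖ ≤ ‖1 - z‖ := by simpa using norm_sub_norm_le (1 : ℂ) z
  rw [hh, norm_div, one_div_mul_eq_div]
  exact div_le_div₀ (Real.exp_pos _).le hg (by simpa using hz) h1z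

theorem stmt_7 (μ g h : ℂ → ℂ)
    (hμd : DifferentiableOn ℂ μ (ball (0 : ℂ) 1))
    (hμ0 : μ 0 = 0)
    (hμlt : ∀ z ∈ ball (0 : ℂ) 1, ‖μ z‖ < 1)
    (hgd : DifferentiableOn ℂ g (ball (0 : ℂ) 1))
    (hgne : ∀ z ∈ ball (0 : ℂ) 1, g z ≠ 0)
    (hg0 : g 0 = 1)
    (heq : ∀ z ∈ ball (0 : ℂ) 1, z * deriv g z * (1 - μ z) * (1 - z) = μ z * g z)
    (hh : ∀ z, h z = g z / (1 - z)) :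
    ∀ z ∈ ball (0 : ℂ) 1,
      ‖h z‖ ≤
        (1 / (1 - ‖z‖)) * Real.exp (‖z‖ / (1 - ‖z‖)) :=
  stmt_7_general μ g h hμd hμ0 hμlt hgd hg0 heq hh
end

section
/- Let μ be analytic on the open unit disk 𝔻 with μ(0) = 0 and |μ(z)| < 1 for all z ∈ 𝔻. Let g be analytic and nonvanishing on 𝔻 with g(0) = 1, and suppose that z·g′(z)·(1 − μ(z))·(1 − z) = μ(z)·g(z) for all z ∈ 𝔻. Define f(z) = (z/(1 − z))·|g(z)|². Then |f(z)| ≤ (|z|/(1 − |z|))·exp(2|z|/(1 − |z|)) for all z ∈ 𝔻. -/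
/-!
Schwarz's lemma gives `‖μ z‖ ≤ ‖z‖`, and then the differential equation together with
`‖1 - μ z‖, ‖1 - z‖ ≥ 1 - ‖z‖` yields `‖g' z‖ (1 - ‖z‖)² ≤ ‖g z‖`. Along the ray `t ↦ t z` this is a
Grönwall inequality `‖q'‖ ≤ r / (1 - t r)² ‖q‖` whose coefficient integrates over `[0, 1]` to
`r / (1 - r)`, so `‖g z‖ ≤ exp (‖z‖ / (1 - ‖z‖))`.
-/

open Complex Metric Set

theorem norm_le_exp_mul_of_norm_deriv_le {E : Type*} [NormedAddCommGroup E]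
    [InnerProductSpace ℝ E] {q q' : ℝ → E} {K k : ℝ → ℝ} {a b : ℝ} (hab : a ≤ b)
    (hq : ∀ t ∈ Icc a b, HasDerivAt q (q' t) t) (hK : ∀ t ∈ Icc a b, HasDerivAt K (k t) t)
    (hle : ∀ t ∈ Ioo a b, ‖q' t‖ ≤ k t * ‖q t‖) :
    ‖q b‖ ≤ Real.exp (K b - K a) * ‖q a‖ := by
  -- Working with `‖q‖ ^ 2`, which is differentiable everywhere, avoids assuming `q t ≠ 0`.
  set P : ℝ → ℝ := fun t => Real.exp (-2 * K t) * ‖q t‖ ^ 2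
  have hP : ∀ t ∈ Icc a b, HasDerivAt P
      (Real.exp (-2 * K t) * (2 * (inner ℝ (q t) (q' t) - k t * ‖q t‖ ^ 2))) t := fun t ht =>
    ((((hK t ht).const_mul (-2)).exp).mul (hq t ht).norm_sq).congr_deriv (by ring)
  have hP_anti : AntitoneOn P (Icc a b) := by
    refine antitoneOn_of_deriv_nonpos (convex_Icc a b)
      (fun t ht => (hP t ht).continuousAt.continuousWithinAt)
      (fun t ht => (hP t (interior_subset ht)).differentiableAt.differentiableWithinAt)
      fun t ht => ?_
    rw [interior_Icc] at ht
    rw [(hP t (Ioo_subset_Icc_self ht)).deriv]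
    have hinner : inner ℝ (q t) (q' t) ≤ k t * ‖q t‖ ^ 2 := calc
      inner ℝ (q t) (q' t) ≤ ‖q t‖ * ‖q' t‖ := real_inner_le_norm _ _
      _ ≤ ‖q t‖ * (k t * ‖q t‖) := mul_le_mul_of_nonneg_left (hle t ht) (norm_nonneg _)
      _ = k t * ‖q t‖ ^ 2 := by ring
    exact mul_nonpos_of_nonneg_of_nonpos (Real.exp_pos _).le (by linarith)
  have hPab : P b ≤ P a := hP_anti ⟨le_rfl, hab⟩ ⟨hab, le_rfl⟩ hab
  have hsq : ‖q b‖ ^ 2 ≤ (Real.exp (K b - K a) * ‖q a‖) ^ 2 := by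
    have hexp : Real.exp (K b - K a) ^ 2 = Real.exp (2 * K b) * Real.exp (-2 * K a) := by
      rw [← Real.exp_nat_mul, ← Real.exp_add]; push_cast; ring_nf
    calc ‖q b‖ ^ 2 = Real.exp (2 * K b) * P b := by
          simp [P, ← mul_assoc, ← Real.exp_add]
      _ ≤ Real.exp (2 * K b) * P a := mul_le_mul_of_nonneg_left hPab (Real.exp_pos _).le
      _ = (Real.exp (K b - K a) * ‖q a‖) ^ 2 := by rw [mul_pow, hexp]; ring
  exact (pow_le_pow_iff_left₀ (norm_nonneg _) (by positivity) two_ne_zero).1 hsq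

theorem norm_mul_mul_one_sub_norm_sq_le {w m a b : ℂ}
    (h : w * a * (1 - m) * (1 - w) = m * b) (hm : ‖m‖ ≤ ‖w‖) (hw : ‖w‖ ≤ 1) :
    ‖w‖ * ‖a‖ * (1 - ‖w‖) ^ 2 ≤ ‖w‖ * ‖b‖ := by
  have hm' : 1 - ‖w‖ ≤ ‖1 - m‖ := by
    have := norm_sub_norm_le (1 : ℂ) m; rw [norm_one] at this; linarith
  have hw' : 1 - ‖w‖ ≤ ‖1 - w‖ := by
    simpa using norm_sub_norm_le (1 : ℂ) w
  have hnorm : ‖w‖ * ‖a‖ * ‖1 - m‖ * ‖1 - w‖ = ‖m‖ * ‖b‖ := by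
    simpa only [norm_mul] using congrArg norm h
  calc ‖w‖ * ‖a‖ * (1 - ‖w‖) ^ 2 = ‖w‖ * ‖a‖ * (1 - ‖w‖) * (1 - ‖w‖) := by ring
    _ ≤ ‖w‖ * ‖a‖ * ‖1 - m‖ * ‖1 - w‖ := by gcongr
    _ = ‖m‖ * ‖b‖ := hnorm
    _ ≤ ‖w‖ * ‖b‖ := by gcongr

-- The bound is multiplied by `‖w‖` so that it is available at `w = 0`, where the differential
-- equation says nothing about `deriv g 0`.
theorem norm_le_exp_mul_norm_of_norm_deriv_mul_sq_le {g : ℂ → ℂ}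
    (hgd : DifferentiableOn ℂ g (ball 0 1))
    (hbound : ∀ w ∈ ball (0 : ℂ) 1, ‖w‖ * ‖deriv g w‖ * (1 - ‖w‖) ^ 2 ≤ ‖w‖ * ‖g w‖)
    {z : ℂ} (hz : z ∈ ball (0 : ℂ) 1) :
    ‖g z‖ ≤ Real.exp (‖z‖ / (1 - ‖z‖)) * ‖g 0‖ := by
  set r := ‖z‖
  have hr : r < 1 := mem_ball_zero_iff.1 hz
  have hnorm : ∀ t : ℝ, 0 ≤ t → ‖(t : ℂ) * z‖ = t * r := fun t ht => by
    rw [norm_mul, norm_real, Real.norm_of_nonneg ht]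
  have hmem : ∀ t ∈ Icc (0 : ℝ) 1, (t : ℂ) * z ∈ ball (0 : ℂ) 1 := fun t ht => by
    rw [mem_ball_zero_iff, hnorm t ht.1]
    nlinarith [ht.2, norm_nonneg z]
  have hpos : ∀ t ∈ Icc (0 : ℝ) 1, 0 < 1 - t * r := fun t ht => by
    nlinarith [ht.2, norm_nonneg z]
  have hq : ∀ t ∈ Icc (0 : ℝ) 1,
      HasDerivAt (fun t : ℝ => g (t * z)) (deriv g (t * z) * z) t := fun t ht =>
    HasDerivAt.comp_ofReal (e := fun s : ℂ => g (s * z))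
      ((hgd.differentiableAt (isOpen_ball.mem_nhds (hmem t ht))).hasDerivAt.comp (t : ℂ)
        (hasDerivAt_mul_const z))
  have hK : ∀ t ∈ Icc (0 : ℝ) 1,
      HasDerivAt (fun t : ℝ => (1 - t * r)⁻¹) (r / (1 - t * r) ^ 2) t := fun t ht =>
    ((((hasDerivAt_id t).mul_const r).const_sub 1).inv (hpos t ht).ne').congr_deriv
      (by simp)
  have hle : ∀ t ∈ Ioo (0 : ℝ) 1,
      ‖deriv g (t * z) * z‖ ≤ r / (1 - t * r) ^ 2 * ‖g (t * z)‖ := by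
    intro t ht
    have hw := hbound _ (hmem t (Ioo_subset_Icc_self ht))
    rw [hnorm t ht.1.le] at hw
    rw [norm_mul, div_mul_eq_mul_div, le_div_iff₀ (pow_pos (hpos t (Ioo_subset_Icc_self ht)) 2)]
    refine le_of_mul_le_mul_left ?_ ht.1
    linarith
  have hK01 : (1 - r)⁻¹ - 1 = r / (1 - r) := by
    field_simp [(sub_pos.2 hr).ne']
    ring
  simpa [hK01] using norm_le_exp_mul_of_norm_deriv_le zero_le_one hq hK hle

theorem stmt_8_general (μ g f : ℂ → ℂ)
    (hμd : DifferentiableOn ℂ μ (ball (0 : ℂ) 1))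
    (hμ0 : μ 0 = 0)
    (hμlt : ∀ z ∈ ball (0 : ℂ) 1, ‖μ z‖ < 1)
    (hgd : DifferentiableOn ℂ g (ball (0 : ℂ) 1))
    (hg0 : g 0 = 1)
    (heq : ∀ z ∈ ball (0 : ℂ) 1, z * deriv g z * (1 - μ z) * (1 - z) = μ z * g z)
    (hf : ∀ z, f z = z / (1 - z) * (Complex.normSq (g z) : ℂ)) :
    ∀ z ∈ ball (0 : ℂ) 1,
      ‖f z‖ ≤
        (‖z‖ / (1 - ‖z‖)) *
          Real.exp (2 * ‖z‖ / (1 - ‖z‖)) := by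
  intro z hz
  have hschwarz : ∀ w ∈ ball (0 : ℂ) 1, ‖μ w‖ ≤ ‖w‖ := fun w hw =>
    norm_le_norm_of_mapsTo_ball hμd (fun x hx => mem_closedBall_zero_iff.2 (hμlt x hx).le) hμ0
      (mem_ball_zero_iff.1 hw)
  have hgrowth : ‖g z‖ ≤ Real.exp (‖z‖ / (1 - ‖z‖)) := by
    simpa [hg0] using norm_le_exp_mul_norm_of_norm_deriv_mul_sq_le hgd
      (fun w hw => norm_mul_mul_one_sub_norm_sq_le (heq w hw) (hschwarz w hw)
        (mem_ball_zero_iff.1 hw).le) hz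
  have hr : 0 < 1 - ‖z‖ := sub_pos.2 (mem_ball_zero_iff.1 hz)
  have h1z : 1 - ‖z‖ ≤ ‖1 - z‖ := by simpa using norm_sub_norm_le (1 : ℂ) z
  rw [hf, norm_mul, norm_div, norm_real, Real.norm_of_nonneg (normSq_nonneg _),
    normSq_eq_norm_sq]
  calc ‖z‖ / ‖1 - z‖ * ‖g z‖ ^ 2
      ≤ ‖z‖ / (1 - ‖z‖) * Real.exp (‖z‖ / (1 - ‖z‖)) ^ 2 := by gcongr
    _ = ‖z‖ / (1 - ‖z‖) * Real.exp (2 * ‖z‖ / (1 - ‖z‖)) := by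
      rw [← Real.exp_nat_mul]; ring_nf

theorem stmt_8 (μ g f : ℂ → ℂ)
    (hμd : DifferentiableOn ℂ μ (ball (0 : ℂ) 1))
    (hμ0 : μ 0 = 0)
    (hμlt : ∀ z ∈ ball (0 : ℂ) 1, ‖μ z‖ < 1)
    (hgd : DifferentiableOn ℂ g (ball (0 : ℂ) 1))
    (hgne : ∀ z ∈ ball (0 : ℂ) 1, g z ≠ 0)
    (hg0 : g 0 = 1)
    (heq : ∀ z ∈ ball (0 : ℂ) 1, z * deriv g z * (1 - μ z) * (1 - z) = μ z * g z)
    (hf : ∀ z, f z = z / (1 - z) * (Complex.normSq (g z) : ℂ)) :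
    ∀ z ∈ ball (0 : ℂ) 1,
      ‖f z‖ ≤
        (‖z‖ / (1 - ‖z‖)) *
          Real.exp (2 * ‖z‖ / (1 - ‖z‖)) :=
  stmt_8_general μ g f hμd hμ0 hμlt hgd hg0 heq hf
end

section
/- Let μ be analytic on the open unit disk 𝔻 with μ(0) = 0 and |μ(z)| < 1 for all z ∈ 𝔻. Let g be analytic and nonvanishing on 𝔻 with g(0) = 1, satisfying z·g′(z)·(1 − μ(z))·(1 − z) = μ(z)·g(z) for all z ∈ 𝔻, and define h(z) = g(z)/(1 − z). Then for all z ∈ 𝔻, |h(z) + z·h′(z)|·|g(z)| ≤ (1/(1 − |z|)³)·exp(2|z|/(1 − |z|)). (The left-hand side equals |f_z(z)| for the log-harmonic mapping f(z) = z·h(z)·conj(g(z)), since f_z = (h + z·h′)·conj(g).) -/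
open Complex Metric Set Filter Topology

/-!
Schwarz's lemma gives `|μ(z)| ≤ |z|`, so the differential equation yields
`|g'(z)| (1 - |z|)² ≤ |g(z)|` on `𝔻` (at `z = 0` by continuity). Along the path
`p(s) = (s / (1 + s)) u` with `|u| ≤ 1` this becomes `|(g ∘ p)'| ≤ |g ∘ p|`, and Gronwall's
inequality up to `s = |z| / (1 - |z|)` gives `|g(z)| ≤ exp (|z| / (1 - |z|))`. Finally
`(h + z h') (1 - μ) (1 - z)² = g`, so `|h + z h'| |g| ≤ |g|² / (1 - |z|)³`.
-/

theorem hasDerivAt_div_one_add {s : ℝ} (hs : 1 + s ≠ 0) :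
    HasDerivAt (fun s : ℝ => s / (1 + s)) ((1 / (1 + s)) ^ 2) s := by
  refine ((hasDerivAt_id' s).div ((hasDerivAt_id' s).const_add 1) hs).congr_deriv ?_
  field_simp
  ring

namespace Complex

theorem norm_le_norm_of_forall_norm_lt_one {μ : ℂ → ℂ} (hμd : DifferentiableOn ℂ μ (ball 0 1))
    (hμ0 : μ 0 = 0) (hμlt : ∀ z ∈ ball (0 : ℂ) 1, ‖μ z‖ < 1) {w : ℂ} (hw : w ∈ ball (0 : ℂ) 1) :
    ‖μ w‖ ≤ ‖w‖ :=
  norm_le_norm_of_mapsTo_ball hμd (fun z hz => mem_closedBall_zero_iff.2 (hμlt z hz).le) hμ0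
    (mem_ball_zero_iff.1 hw)

theorem one_sub_norm_le_norm_one_sub {m z : ℂ} (hm : ‖m‖ ≤ ‖z‖) : 1 - ‖z‖ ≤ ‖1 - m‖ := by
  have := norm_sub_norm_le (1 : ℂ) m
  rw [norm_one] at this
  linarith

theorem norm_mul_one_sub_norm_sq_le_of_mul_eq {z m a b : ℂ} (hz0 : z ≠ 0) (hz : ‖z‖ ≤ 1)
    (hm : ‖m‖ ≤ ‖z‖) (h : z * a * (1 - m) * (1 - z) = m * b) :
    ‖a‖ * (1 - ‖z‖) ^ 2 ≤ ‖b‖ := by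
  have hnorm : ‖z‖ * (‖a‖ * (‖1 - m‖ * ‖1 - z‖)) = ‖m‖ * ‖b‖ := by
    rw [← norm_mul, ← norm_mul, ← norm_mul, ← norm_mul, ← h]; ring_nf
  have hab : ‖a‖ * (‖1 - m‖ * ‖1 - z‖) ≤ ‖b‖ :=
    le_of_mul_le_mul_left (hnorm.trans_le (by gcongr)) (norm_pos_iff.2 hz0)
  have hsq : (1 - ‖z‖) ^ 2 ≤ ‖1 - m‖ * ‖1 - z‖ := by
    rw [sq]
    exact mul_le_mul (one_sub_norm_le_norm_one_sub hm) (one_sub_norm_le_norm_one_sub le_rfl)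
      (by linarith) (norm_nonneg _)
  exact (mul_le_mul_of_nonneg_left hsq (norm_nonneg a)).trans hab

theorem norm_deriv_mul_one_sub_norm_sq_le_of_ode {μ g : ℂ → ℂ}
    (hμd : DifferentiableOn ℂ μ (ball 0 1)) (hμ0 : μ 0 = 0)
    (hμlt : ∀ z ∈ ball (0 : ℂ) 1, ‖μ z‖ < 1) (hgd : DifferentiableOn ℂ g (ball 0 1))
    (heq : ∀ z ∈ ball (0 : ℂ) 1, z * deriv g z * (1 - μ z) * (1 - z) = μ z * g z) :
    ∀ w ∈ ball (0 : ℂ) 1, ‖deriv g w‖ * (1 - ‖w‖) ^ 2 ≤ ‖g w‖ := by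
  have hpunct : ∀ w ∈ ball (0 : ℂ) 1, w ≠ 0 → ‖deriv g w‖ * (1 - ‖w‖) ^ 2 ≤ ‖g w‖ :=
    fun w hw hw0 => norm_mul_one_sub_norm_sq_le_of_mul_eq hw0 (mem_ball_zero_iff.1 hw).le
      (norm_le_norm_of_forall_norm_lt_one hμd hμ0 hμlt hw) (heq w hw)
  intro w hw
  rcases eq_or_ne w 0 with rfl | hw0
  · -- at the origin the equation carries no information; pass to the limit instead
    have hball : ball (0 : ℂ) 1 ∈ 𝓝 0 := ball_mem_nhds 0 one_pos
    have hlhs : ContinuousAt (fun w => ‖deriv g w‖ * (1 - ‖w‖) ^ 2) 0 :=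
      (((hgd.deriv isOpen_ball).continuousOn.continuousAt hball).norm).mul (by fun_prop)
    have hrhs : ContinuousAt (fun w => ‖g w‖) 0 := (hgd.continuousOn.continuousAt hball).norm
    refine le_of_tendsto_of_tendsto (b := 𝓝[≠] (0 : ℂ)) (hlhs.tendsto.mono_left nhdsWithin_le_nhds)
      (hrhs.tendsto.mono_left nhdsWithin_le_nhds) ?_
    filter_upwards [self_mem_nhdsWithin, nhdsWithin_le_nhds hball] with w hw0 hw
    exact hpunct w hw hw0
  · exact hpunct w hw hw0

theorem one_div_one_add_le_one_sub_norm {u : ℂ} (hu : ‖u‖ ≤ 1) {s : ℝ} (hs : 0 ≤ s) :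
    1 / (1 + s) ≤ 1 - ‖((s / (1 + s) : ℝ) : ℂ) * u‖ := by
  rw [norm_mul, norm_real, Real.norm_of_nonneg (by positivity)]
  have hsu : s / (1 + s) * ‖u‖ ≤ s / (1 + s) := mul_le_of_le_one_right (by positivity) hu
  have : 1 / (1 + s) = 1 - s / (1 + s) := by field_simp; ring
  linarith

theorem norm_le_mul_exp_of_norm_deriv_le_along_ray {g : ℂ → ℂ}
    (hgd : DifferentiableOn ℂ g (ball 0 1))
    (hg' : ∀ w ∈ ball (0 : ℂ) 1, ‖deriv g w‖ * (1 - ‖w‖) ^ 2 ≤ ‖g w‖) {u : ℂ} (hu : ‖u‖ ≤ 1)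
    {S : ℝ} (hS : 0 ≤ S) :
    ‖g (((S / (1 + S) : ℝ) : ℂ) * u)‖ ≤ ‖g 0‖ * Real.exp S := by
  set p : ℝ → ℂ := fun s => ((s / (1 + s) : ℝ) : ℂ) * u
  have hp_mem : ∀ s, 0 ≤ s → p s ∈ ball (0 : ℂ) 1 := by
    intro s hs
    have := one_div_one_add_le_one_sub_norm hu hs
    have : 0 < 1 / (1 + s) := by positivity
    rw [mem_ball_zero_iff]
    linarith
  have hgp : ∀ s, 0 ≤ s →
      HasDerivAt (g ∘ p) (deriv g (p s) * (((1 / (1 + s)) ^ 2 : ℝ) * u)) s := fun s hs =>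
    (hgd.differentiableAt (isOpen_ball.mem_nhds (hp_mem s hs))).hasDerivAt.comp s
      ((hasDerivAt_div_one_add (by positivity)).ofReal_comp.mul_const u)
  -- `p` is parametrised so that the Gronwall coefficient `|p'(s)| / (1 - |p s|)²` is at most `1`
  have hbound : ∀ s ∈ Ico 0 S,
      ‖deriv g (p s) * (((1 / (1 + s)) ^ 2 : ℝ) * u)‖ ≤ 1 * ‖(g ∘ p) s‖ + 0 := by
    rintro s ⟨hs, -⟩
    have hps := one_div_one_add_le_one_sub_norm hu hs
    rw [norm_mul, norm_mul, norm_real, Real.norm_of_nonneg (by positivity)]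
    calc ‖deriv g (p s)‖ * ((1 / (1 + s)) ^ 2 * ‖u‖)
        ≤ ‖deriv g (p s)‖ * (1 - ‖p s‖) ^ 2 := by
          gcongr
          calc (1 / (1 + s)) ^ 2 * ‖u‖ ≤ (1 / (1 + s)) ^ 2 :=
                mul_le_of_le_one_right (by positivity) hu
            _ ≤ _ := by gcongr
      _ ≤ 1 * ‖(g ∘ p) s‖ + 0 := by simpa using hg' (p s) (hp_mem s hs)
  have key := norm_le_gronwallBound_of_norm_deriv_right_le (f := g ∘ p) (δ := ‖g 0‖)
    (a := 0) (b := S)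
    (fun s hs => (hgp s hs.1).continuousAt.continuousWithinAt)
    (fun s hs => (hgp s hs.1).hasDerivWithinAt) (by simp [p]) hbound S ⟨hS, le_rfl⟩
  rwa [gronwallBound_ε0, sub_zero, one_mul] at key

theorem norm_le_mul_exp_of_norm_deriv_le {g : ℂ → ℂ}
    (hgd : DifferentiableOn ℂ g (ball 0 1))
    (hg' : ∀ w ∈ ball (0 : ℂ) 1, ‖deriv g w‖ * (1 - ‖w‖) ^ 2 ≤ ‖g w‖) {z : ℂ}
    (hz : z ∈ ball (0 : ℂ) 1) :
    ‖g z‖ ≤ ‖g 0‖ * Real.exp (‖z‖ / (1 - ‖z‖)) := by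
  have hr : ‖z‖ < 1 := mem_ball_zero_iff.1 hz
  have hu : ‖z / ‖z‖‖ ≤ 1 := by
    rcases eq_or_ne z 0 with rfl | hz0
    · simp
    · simp [hz0]
  have hpoint : (((‖z‖ / (1 - ‖z‖)) / (1 + ‖z‖ / (1 - ‖z‖)) : ℝ) : ℂ) * (z / ‖z‖) = z := by
    have h1r : 1 - ‖z‖ ≠ 0 := by linarith
    rcases eq_or_ne z 0 with rfl | hz0
    · simp
    · rw [show (‖z‖ / (1 - ‖z‖)) / (1 + ‖z‖ / (1 - ‖z‖)) = ‖z‖ by field_simp; ring]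
      exact mul_div_cancel₀ z (ofReal_ne_zero.2 (norm_ne_zero_iff.2 hz0))
  have := norm_le_mul_exp_of_norm_deriv_le_along_ray hgd hg' hu
    (div_nonneg (norm_nonneg z) (sub_nonneg.2 hr.le))
  rwa [hpoint] at this

theorem add_mul_deriv_div_one_sub_mul_eq {g : ℂ → ℂ} {z m : ℂ}
    (hg : DifferentiableAt ℂ g z) (hz : 1 - z ≠ 0)
    (h : z * deriv g z * (1 - m) * (1 - z) = m * g z) :
    (g z / (1 - z) + z * deriv (fun w => g w / (1 - w)) z) * ((1 - m) * (1 - z) ^ 2) = g z := by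
  have hd : HasDerivAt (fun w => g w / (1 - w)) _ z :=
    hg.hasDerivAt.div ((hasDerivAt_id' z).const_sub 1) hz
  rw [hd.deriv]
  field_simp
  linear_combination h

end Complex

theorem stmt_9_general (μ g h : ℂ → ℂ)
    (hμd : DifferentiableOn ℂ μ (ball (0 : ℂ) 1))
    (hμ0 : μ 0 = 0)
    (hμlt : ∀ z ∈ ball (0 : ℂ) 1, ‖μ z‖ < 1)
    (hgd : DifferentiableOn ℂ g (ball (0 : ℂ) 1))
    (hg0 : g 0 = 1)
    (heq : ∀ z ∈ ball (0 : ℂ) 1, z * deriv g z * (1 - μ z) * (1 - z) = μ z * g z)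
    (hh : ∀ z, h z = g z / (1 - z)) :
    ∀ z ∈ ball (0 : ℂ) 1,
      ‖h z + z * deriv h z‖ * ‖g z‖ ≤
        (1 / (1 - ‖z‖) ^ 3) *
          Real.exp (2 * ‖z‖ / (1 - ‖z‖)) := by
  intro z hz
  obtain rfl : h = fun w => g w / (1 - w) := funext hh
  have hr : ‖z‖ < 1 := mem_ball_zero_iff.1 hz
  have hz1 : 1 - z ≠ 0 := sub_ne_zero.2 fun h1 => by simp [← h1] at hr
  have hnorm := congrArg norm <| add_mul_deriv_div_one_sub_mul_eq
    (hgd.differentiableAt (isOpen_ball.mem_nhds hz)) hz1 (heq z hz)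
  rw [norm_mul, norm_mul, norm_pow] at hnorm
  have hcube : (1 - ‖z‖) ^ 3 ≤ ‖1 - μ z‖ * ‖1 - z‖ ^ 2 := by
    rw [pow_succ']
    exact mul_le_mul
      (one_sub_norm_le_norm_one_sub (norm_le_norm_of_forall_norm_lt_one hμd hμ0 hμlt hz))
      (pow_le_pow_left₀ (by linarith) (one_sub_norm_le_norm_one_sub le_rfl) 2)
      (by positivity) (norm_nonneg _)
  have hgrowth : ‖g z‖ ≤ Real.exp (‖z‖ / (1 - ‖z‖)) := by
    simpa [hg0] using norm_le_mul_exp_of_norm_deriv_le hgd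
      (norm_deriv_mul_one_sub_norm_sq_le_of_ode hμd hμ0 hμlt hgd heq) hz
  rw [one_div_mul_eq_div, le_div_iff₀ (pow_pos (sub_pos.2 hr) 3)]
  calc ‖g z / (1 - z) + z * deriv (fun w => g w / (1 - w)) z‖ * ‖g z‖ * (1 - ‖z‖) ^ 3
      ≤ ‖g z / (1 - z) + z * deriv (fun w => g w / (1 - w)) z‖ * ‖g z‖ *
          (‖1 - μ z‖ * ‖1 - z‖ ^ 2) := by gcongr
    _ = ‖g z‖ ^ 2 := by rw [← hnorm]; ring
    _ ≤ Real.exp (‖z‖ / (1 - ‖z‖)) ^ 2 := by gcongr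
    _ = Real.exp (2 * ‖z‖ / (1 - ‖z‖)) := by rw [← Real.exp_nat_mul]; ring_nf

theorem stmt_9 (μ g h : ℂ → ℂ)
    (hμd : DifferentiableOn ℂ μ (ball (0 : ℂ) 1))
    (hμ0 : μ 0 = 0)
    (hμlt : ∀ z ∈ ball (0 : ℂ) 1, ‖μ z‖ < 1)
    (hgd : DifferentiableOn ℂ g (ball (0 : ℂ) 1))
    (hgne : ∀ z ∈ ball (0 : ℂ) 1, g z ≠ 0)
    (hg0 : g 0 = 1)
    (heq : ∀ z ∈ ball (0 : ℂ) 1, z * deriv g z * (1 - μ z) * (1 - z) = μ z * g z)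
    (hh : ∀ z, h z = g z / (1 - z)) :
    ∀ z ∈ ball (0 : ℂ) 1,
      ‖h z + z * deriv h z‖ * ‖g z‖ ≤
        (1 / (1 - ‖z‖) ^ 3) *
          Real.exp (2 * ‖z‖ / (1 - ‖z‖)) :=
  stmt_9_general μ g h hμd hμ0 hμlt hgd hg0 heq hh
end

section
/- Define the log-harmonic Koebe mapping f₀ on the open unit disk by f₀(z) = (z/(1 − z)²)·|1 − z|²·exp(Re(4z/(1 − z))). Then for every θ ∈ (0, 2π), the boundary value of f₀ at z = e^{iθ} (given by the same formula, which is defined for all z ≠ 1) satisfies f₀(e^{iθ}) = −e^{−2}; that is, Re f₀(e^{iθ}) = −1/e² and Im f₀(e^{iθ}) = 0. -/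
/-!
On the unit circle `conj z = z⁻¹`, so for `z ≠ 1` we get `|1 - z|² = (1 - z)(1 - z⁻¹) = -(1 - z)² / z`,
which cancels the Koebe factor `z / (1 - z)²` down to `-1`; likewise `z / (1 - z) + conj (z / (1 - z)) = -1`,
so `Re (4z / (1 - z)) = -2` and the exponential factor is the constant `e⁻²`.
-/

open Complex Metric Set

open scoped ComplexConjugate

lemma Complex.exp_ofReal_mul_I_ne_one {θ : ℝ} (h0 : 0 < θ) (h2π : θ < 2 * Real.pi) :
    exp (θ * I) ≠ 1 := by
  intro h
  have hcos : Real.cos θ = 1 := by simpa only [exp_ofReal_mul_I_re, one_re] using congrArg re h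
  exact h0.ne' ((Real.cos_eq_one_iff_of_lt_of_lt (by linarith) h2π).1 hcos)

lemma Complex.conj_one_sub_of_norm_eq_one {z : ℂ} (hz : ‖z‖ = 1) :
    conj (1 - z) = 1 - z⁻¹ := by
  rw [map_sub, map_one, inv_eq_conj hz]

lemma Complex.div_one_sub_sq_mul_norm_one_sub_sq {z : ℂ} (hz : ‖z‖ = 1) (hz1 : z ≠ 1) :
    z / (1 - z) ^ 2 * ((‖1 - z‖ : ℝ) : ℂ) ^ 2 = -1 := by
  have hz0 : z ≠ 0 := norm_ne_zero_iff.1 (hz ▸ one_ne_zero)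
  have hw : 1 - z ≠ 0 := sub_ne_zero.2 hz1.symm
  rw [← mul_conj', conj_one_sub_of_norm_eq_one hz]
  field_simp
  ring

lemma Complex.re_div_one_sub_of_norm_eq_one {z : ℂ} (hz : ‖z‖ = 1) (hz1 : z ≠ 1) :
    (z / (1 - z)).re = -1 / 2 := by
  have hz0 : z ≠ 0 := norm_ne_zero_iff.1 (hz ▸ one_ne_zero)
  have hw : 1 - z ≠ 0 := sub_ne_zero.2 hz1.symm
  have hw' : 1 - z⁻¹ ≠ 0 := by rwa [← conj_one_sub_of_norm_eq_one hz, map_ne_zero]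
  have hsum : z / (1 - z) + conj (z / (1 - z)) = -1 := by
    rw [map_div₀, conj_one_sub_of_norm_eq_one hz, ← inv_eq_conj hz]
    field_simp
    ring
  apply ofReal_injective
  rw [re_eq_add_conj, hsum]
  push_cast
  ring

theorem stmt_12 (f₀ : ℂ → ℂ)
    (hf₀ : ∀ z : ℂ, z ≠ 1 →
        f₀ z = z / (1 - z) ^ 2 * ((‖1 - z‖ : ℝ) : ℂ) ^ 2 *
          ((Real.exp ((4 * z / (1 - z)).re) : ℝ) : ℂ)) :
    ∀ θ ∈ Set.Ioo (0 : ℝ) (2 * Real.pi),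
      f₀ (Complex.exp (θ * Complex.I)) = ((-(Real.exp 2)⁻¹ : ℝ) : ℂ) ∧
        (f₀ (Complex.exp (θ * Complex.I))).re = -(1 / Real.exp 2) ∧
        (f₀ (Complex.exp (θ * Complex.I))).im = 0 := by
  rintro θ ⟨h0, h2π⟩
  have hz : ‖exp (θ * I)‖ = 1 := norm_exp_ofReal_mul_I θ
  have hz1 : exp (θ * I) ≠ 1 := exp_ofReal_mul_I_ne_one h0 h2π
  have hre : (4 * exp (θ * I) / (1 - exp (θ * I))).re = -2 := by
    rw [mul_div_assoc, mul_re, re_div_one_sub_of_norm_eq_one hz hz1, re_ofNat, im_ofNat]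
    norm_num
  have hval : f₀ (exp (θ * I)) = ((-(Real.exp 2)⁻¹ : ℝ) : ℂ) := by
    rw [hf₀ _ hz1, div_one_sub_sq_mul_norm_one_sub_sq hz hz1, hre, Real.exp_neg]
    push_cast
    ring
  exact ⟨hval, by rw [hval, ofReal_re, one_div], by rw [hval, ofReal_im]⟩
end

section
/- Define f₀ on the open unit disk 𝔻 by f₀(z) = (z/(1 − z)²)·|1 − z|²·exp(Re(4z/(1 − z))). Then f₀ is injective on 𝔻 and the image f₀(𝔻) equals ℂ \ {w ∈ ℂ : Im w = 0 and Re w ≤ −e^{−2}}, i.e., the complex plane minus the real slit (−∞, −1/e²]. -/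
/-!
Substituting `w = z / (1 - z)`, which maps the disk onto the half-plane `-1/2 < re w`, turns `f₀`
into `F w = e^{4u} w / (1 + w̄)` with `u = re w`, and `F w + e^{4u} = e^{4u} (1 + 2u) / (1 + w̄)`.
Inversion maps the line `re s = 1 + u` onto a circle through `0`, so `F` maps the line `re w = u`
bijectively onto the circle with diameter `[-e^{4u}, u e^{4u} / (1 + u)]` punctured at `-e^{4u}`.
Both ends of the diameter move strictly outwards as `u` grows, so these circles are nested and
disjoint; they shrink to `-e^{-2}` as `u → -1/2` and exhaust the plane as `u → ∞`, while the
punctures `-e^{4u}` sweep out the slit.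
-/

open Complex Metric Set
open ComplexConjugate

theorem Complex.re_ofReal_div_eq_iff {ζ : ℂ} (hζ : ζ ≠ 0) {K ρ : ℝ} (hK : 0 ≤ K)
    (hρ : 0 < ρ) :
    ((K : ℂ) / ζ).re = ρ ↔ ‖ζ - ((K / (2 * ρ) : ℝ) : ℂ)‖ = K / (2 * ρ) := by
  have hN : normSq ζ ≠ 0 := (normSq_pos.mpr hζ).ne'
  rw [← sq_eq_sq₀ (norm_nonneg _) (by positivity), Complex.sq_norm, normSq_apply, div_re,
    ofReal_re, ofReal_im, zero_mul, zero_div, add_zero, div_eq_iff hN, normSq_apply]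
  simp only [sub_re, sub_im, ofReal_re, ofReal_im, sub_zero]
  field_simp
  constructor <;> intro h
  · linear_combination (-4 * ρ) * h
  · refine mul_left_cancel₀ (by positivity : 4 * ρ ≠ 0) ?_
    linear_combination -h

theorem Complex.norm_lt_norm_one_add_iff {w : ℂ} : ‖w‖ < ‖1 + w‖ ↔ -1 / 2 < w.re := by
  rw [← sq_lt_sq₀ (norm_nonneg _) (norm_nonneg _), Complex.sq_norm, Complex.sq_norm,
    normSq_apply, normSq_apply]
  simp only [add_re, one_re, add_im, one_im, zero_add]
  constructor <;> intro h <;> nlinarith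

theorem Complex.bijOn_div_one_sub_ball :
    BijOn (fun z : ℂ => z / (1 - z)) (ball 0 1) {w | -1 / 2 < w.re} := by
  have h₁ : ∀ z ∈ ball (0 : ℂ) 1, 1 - z ≠ 0 := fun z hz h => by
    simp [← eq_of_sub_eq_zero h] at hz
  have h₂ : ∀ w ∈ {w : ℂ | -1 / 2 < w.re}, 1 + w ≠ 0 := fun w (hw : -1 / 2 < w.re) h => by
    have := congrArg re h; simp at this; linarith
  refine InvOn.bijOn (f' := fun w => w / (1 + w)) ⟨fun z hz => ?_, fun w hw => ?_⟩
    (fun z hz => ?_) (fun w hw => ?_)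
  · have := h₁ z hz
    field_simp
    ring
  · have := h₂ w hw
    field_simp
    ring
  · have := h₁ z hz
    rw [mem_ofPred_eq, ← norm_lt_norm_one_add_iff,
      show 1 + z / (1 - z) = 1 / (1 - z) by field_simp; ring, norm_div, norm_div]
    gcongr
    simpa using hz
  · rw [mem_ball_zero_iff, norm_div, div_lt_one (norm_pos_iff.mpr (h₂ w hw))]
    exact norm_lt_norm_one_add_iff.mpr hw

theorem Complex.one_add_conj_ne_zero {w : ℂ} (hw : w.re ≠ -1) : 1 + conj w ≠ 0 := by
  contrapose! hw
  simpa using congrArg re (eq_neg_of_add_eq_zero_right hw)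

def diameterCircle (a b : ℝ) : Set ℂ := sphere (((a + b) / 2 : ℝ) : ℂ) ((b - a) / 2)

theorem eq_or_eq_of_ofReal_mem_diameterCircle {a b x : ℝ}
    (hx : (x : ℂ) ∈ diameterCircle a b) : x = a ∨ x = b := by
  rw [diameterCircle, mem_sphere, isometry_ofReal.dist_eq, Real.dist_eq] at hx
  rcases eq_or_eq_neg_of_abs_eq hx with h | h
  · right; linarith
  · left; linarith

theorem disjoint_diameterCircle {a b a' b' : ℝ} (ha : a' < a) (hb : b < b') :
    Disjoint (diameterCircle a b) (diameterCircle a' b') := by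
  refine (sphere_disjoint_ball.mono_right ?_).symm
  refine sphere_subset_closedBall.trans (closedBall_subset_ball' ?_)
  rw [isometry_ofReal.dist_eq, Real.dist_eq, ← lt_sub_iff_add_lt', abs_sub_lt_iff]
  constructor <;> linarith

theorem exp_four_mul_neg_half : Real.exp (4 * (-1 / 2)) = (Real.exp 2)⁻¹ := by
  rw [← Real.exp_neg]; norm_num

noncomputable def koebeRight (u : ℝ) : ℝ := u * Real.exp (4 * u) / (1 + u)

theorem hasDerivAt_koebeRight {u : ℝ} (hu : u ≠ -1) :
    HasDerivAt koebeRight (Real.exp (4 * u) * (1 + 2 * u) ^ 2 / (1 + u) ^ 2) u := by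
  have hu' : 1 + u ≠ 0 := by contrapose! hu; linarith
  have h : HasDerivAt (fun u : ℝ => u * Real.exp (4 * u) / (1 + u)) _ u :=
    ((hasDerivAt_id' u).mul ((hasDerivAt_id' u).const_mul 4).exp).div
      ((hasDerivAt_id' u).const_add 1) hu'
  exact h.congr_deriv (by simp only [Pi.mul_apply]; field_simp; ring)

theorem continuousOn_koebeRight : ContinuousOn koebeRight (Ioi (-1)) :=
  fun _ hu => (hasDerivAt_koebeRight (ne_of_gt hu)).continuousAt.continuousWithinAt

theorem strictMonoOn_koebeRight : StrictMonoOn koebeRight (Ici (-1 / 2)) := by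
  refine strictMonoOn_of_deriv_pos (convex_Ici _)
    (continuousOn_koebeRight.mono fun u (hu : -1 / 2 ≤ u) => by simp only [mem_Ioi]; linarith)
    fun u hu => ?_
  rw [interior_Ici, mem_Ioi] at hu
  rw [(hasDerivAt_koebeRight (by linarith)).deriv]
  have : 0 < 1 + 2 * u := by linarith
  have : 0 < 1 + u := by linarith
  positivity

theorem koebeRight_neg_half : koebeRight (-1 / 2) = -(Real.exp 2)⁻¹ := by
  rw [koebeRight, exp_four_mul_neg_half]
  ring

theorem le_koebeRight {u : ℝ} (hu : 0 ≤ u) : u ≤ koebeRight u := by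
  rw [koebeRight, le_div_iff₀ (by positivity)]
  nlinarith [Real.add_one_le_exp (4 * u)]

theorem koebeRight_le_exp {u : ℝ} (hu : 0 ≤ u) : koebeRight u ≤ Real.exp (4 * u) := by
  rw [koebeRight, div_le_iff₀ (by positivity)]
  nlinarith [Real.exp_pos (4 * u)]

noncomputable def koebeScale (u : ℝ) : ℝ := Real.exp (4 * u) * (1 + 2 * u)

theorem koebeScale_pos {u : ℝ} (hu : -1 / 2 < u) : 0 < koebeScale u :=
  mul_pos (Real.exp_pos _) (by linarith)

def koebeCircle (u : ℝ) : Set ℂ := diameterCircle (-Real.exp (4 * u)) (koebeRight u)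

theorem mem_koebeCircle_iff {u : ℝ} (hu : -1 / 2 ≤ u) {T : ℂ}
    (hT : T + Real.exp (4 * u) ≠ 0) :
    T ∈ koebeCircle u ↔ ((koebeScale u : ℂ) / (T + Real.exp (4 * u))).re = 1 + u := by
  have hK : 0 ≤ koebeScale u := mul_nonneg (Real.exp_pos _).le (by linarith)
  have hr : (koebeRight u - -Real.exp (4 * u)) / 2 = koebeScale u / (2 * (1 + u)) := by
    have : 1 + u ≠ 0 := by linarith
    rw [koebeRight, koebeScale]; field_simp; ring
  have hc : (((-Real.exp (4 * u) + koebeRight u) / 2 : ℝ) : ℂ) =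
      ((koebeScale u / (2 * (1 + u)) : ℝ) : ℂ) - Real.exp (4 * u) := by
    rw [← hr]; push_cast; ring
  rw [Complex.re_ofReal_div_eq_iff hT hK (by linarith), koebeCircle, diameterCircle, mem_sphere,
    dist_eq, hr, hc, sub_sub_eq_add_sub]

theorem eq_of_mem_koebeCircle {u v : ℝ} (hu : -1 / 2 ≤ u) (hv : -1 / 2 ≤ v) {T : ℂ}
    (hTu : T ∈ koebeCircle u) (hTv : T ∈ koebeCircle v) : u = v := by
  have nested : ∀ {u v : ℝ}, -1 / 2 ≤ u → u < v →
      Disjoint (koebeCircle u) (koebeCircle v) :=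
    fun hu huv => disjoint_diameterCircle (by simpa using Real.exp_lt_exp.mpr (by linarith))
      (strictMonoOn_koebeRight hu (le_trans hu huv.le) huv)
  rcases lt_trichotomy u v with huv | huv | huv
  · exact absurd rfl ((nested hu huv).ne_of_mem hTu hTv)
  · exact huv
  · exact absurd rfl ((nested hv huv).ne_of_mem hTv hTu)

theorem exists_mem_koebeCircle {T : ℂ} (hT : T ≠ -(Real.exp 2)⁻¹) :
    ∃ u, -1 / 2 < u ∧ T ∈ koebeCircle u := by
  set g : ℝ → ℝ := fun u => dist T (((-Real.exp (4 * u) + koebeRight u) / 2 : ℝ) : ℂ) -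
    (koebeRight u - -Real.exp (4 * u)) / 2 with hg
  set M := ‖T‖ + 1
  have hM : 0 ≤ M := by positivity
  have hg_cont : ContinuousOn g (Icc (-1 / 2) M) := by
    have := continuousOn_koebeRight.mono fun u (hu : u ∈ Icc (-1 / 2) M) => by
      simp only [mem_Ioi]; linarith [hu.1]
    fun_prop
  have hg_start : 0 < g (-1 / 2) := by
    simp only [hg, koebeRight_neg_half, exp_four_mul_neg_half, sub_self, zero_div, sub_zero,
      add_self_div_two]
    exact dist_pos.mpr (by rwa [ofReal_neg])
  have hg_end : g M < 0 := by
    have := le_koebeRight hM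
    have := koebeRight_le_exp hM
    calc g M = dist T (((-Real.exp (4 * M) + koebeRight M) / 2 : ℝ) : ℂ) -
          (koebeRight M - -Real.exp (4 * M)) / 2 := rfl
      _ ≤ ‖T‖ + |(-Real.exp (4 * M) + koebeRight M) / 2| -
          (koebeRight M - -Real.exp (4 * M)) / 2 := by
          gcongr
          simpa only [dist_zero_right, dist_zero_left, norm_real, Real.norm_eq_abs]
            using dist_triangle T 0 (((-Real.exp (4 * M) + koebeRight M) / 2 : ℝ) : ℂ)
      _ = ‖T‖ - koebeRight M := by rw [abs_of_nonpos (by linarith)]; ring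
      _ < 0 := by linarith
  obtain ⟨u, hu, hgu⟩ :=
    intermediate_value_Icc' (by linarith) hg_cont ⟨hg_end.le, hg_start.le⟩
  refine ⟨u, lt_of_le_of_ne hu.1 ?_, sub_eq_zero.mp hgu⟩
  rintro rfl
  exact hg_start.ne' hgu

def koebeSlit : Set ℂ := {T | T.im = 0 ∧ T.re ≤ -(Real.exp 2)⁻¹}

theorem neg_exp_mem_koebeSlit {u : ℝ} (hu : -1 / 2 ≤ u) :
    -(Real.exp (4 * u) : ℂ) ∈ koebeSlit := by
  refine ⟨by simp [-ofReal_exp], ?_⟩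
  rw [neg_re, ofReal_re, neg_le_neg_iff, ← exp_four_mul_neg_half]
  exact Real.exp_le_exp.mpr (by linarith)

noncomputable def logKoebeHalfPlane (w : ℂ) : ℂ := Real.exp (4 * w.re) * w / (1 + conj w)

theorem logKoebeHalfPlane_add_exp {w : ℂ} (hw : w.re ≠ -1) :
    logKoebeHalfPlane w + Real.exp (4 * w.re) = (koebeScale w.re : ℂ) / (1 + conj w) := by
  rw [logKoebeHalfPlane, div_add' _ _ _ (one_add_conj_ne_zero hw), koebeScale]
  congr 1
  have h := Complex.add_conj w
  push_cast [-ofReal_exp] at h ⊢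
  linear_combination (Real.exp (4 * w.re) : ℂ) * h

theorem logKoebeHalfPlane_add_exp_ne_zero {w : ℂ} (hw : -1 / 2 < w.re) :
    logKoebeHalfPlane w + Real.exp (4 * w.re) ≠ 0 := by
  rw [logKoebeHalfPlane_add_exp (by linarith)]
  exact div_ne_zero (ofReal_ne_zero.mpr (koebeScale_pos hw).ne')
    (one_add_conj_ne_zero (by linarith))

theorem one_add_conj_eq_koebeScale_div {w : ℂ} (hw : -1 / 2 < w.re) :
    1 + conj w = (koebeScale w.re : ℂ) / (logKoebeHalfPlane w + Real.exp (4 * w.re)) := by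
  rw [logKoebeHalfPlane_add_exp (by linarith),
    div_div_cancel₀ (ofReal_ne_zero.mpr (koebeScale_pos hw).ne')]

theorem logKoebeHalfPlane_mem_koebeCircle {w : ℂ} (hw : -1 / 2 < w.re) :
    logKoebeHalfPlane w ∈ koebeCircle w.re := by
  rw [mem_koebeCircle_iff hw.le (logKoebeHalfPlane_add_exp_ne_zero hw),
    ← one_add_conj_eq_koebeScale_div hw]
  simp

theorem mapsTo_logKoebeHalfPlane :
    MapsTo logKoebeHalfPlane {w | -1 / 2 < w.re} koebeSlitᶜ := by
  rintro w (hw : -1 / 2 < w.re) ⟨him, hre⟩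
  have hreal : logKoebeHalfPlane w = ((logKoebeHalfPlane w).re : ℂ) :=
    (re_add_im _).symm.trans (by simp [him])
  rcases eq_or_eq_of_ofReal_mem_diameterCircle
    (hreal ▸ logKoebeHalfPlane_mem_koebeCircle hw) with h | h
  · exact logKoebeHalfPlane_add_exp_ne_zero hw (by rw [hreal, h]; push_cast; ring)
  · have := strictMonoOn_koebeRight (le_refl (-1 / 2 : ℝ)) hw.le hw
    rw [koebeRight_neg_half, ← h] at this
    linarith

theorem injOn_logKoebeHalfPlane : InjOn logKoebeHalfPlane {w | -1 / 2 < w.re} := by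
  intro w₁ (hw₁ : -1 / 2 < w₁.re) w₂ (hw₂ : -1 / 2 < w₂.re) h
  have hre : w₁.re = w₂.re := eq_of_mem_koebeCircle hw₁.le hw₂.le
    (logKoebeHalfPlane_mem_koebeCircle hw₁) (h ▸ logKoebeHalfPlane_mem_koebeCircle hw₂)
  have hconj := one_add_conj_eq_koebeScale_div hw₁
  rw [h, hre, ← one_add_conj_eq_koebeScale_div hw₂] at hconj
  simpa using congrArg conj hconj

theorem surjOn_logKoebeHalfPlane : SurjOn logKoebeHalfPlane {w | -1 / 2 < w.re} koebeSlitᶜ := by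
  intro T hT
  obtain ⟨u, hu, hTu⟩ := exists_mem_koebeCircle (T := T) fun h => hT <| by
    simpa [h, exp_four_mul_neg_half, -ofReal_exp] using neg_exp_mem_koebeSlit (le_refl (-1 / 2))
  have hTE : T + Real.exp (4 * u) ≠ 0 := fun h =>
    hT (eq_neg_of_add_eq_zero_left h ▸ neg_exp_mem_koebeSlit hu.le)
  -- forced by `logKoebeHalfPlane_add_exp`, which gives `1 + conj w = koebeScale u / (T + e^{4u})`
  set w := conj ((koebeScale u : ℂ) / (T + Real.exp (4 * u))) - 1 with hw
  have hwre : w.re = u := by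
    rw [hw, sub_re, conj_re, (mem_koebeCircle_iff hu.le hTE).mp hTu]
    simp
  refine ⟨w, show -1 / 2 < w.re by rw [hwre]; exact hu, ?_⟩
  have := logKoebeHalfPlane_add_exp (w := w) (by linarith)
  rw [hwre, hw, map_sub, conj_conj, map_one, add_sub_cancel,
    div_div_cancel₀ (ofReal_ne_zero.mpr (koebeScale_pos hu).ne')] at this
  exact add_right_cancel this

theorem bijOn_logKoebeHalfPlane : BijOn logKoebeHalfPlane {w | -1 / 2 < w.re} koebeSlitᶜ :=
  ⟨mapsTo_logKoebeHalfPlane, injOn_logKoebeHalfPlane, surjOn_logKoebeHalfPlane⟩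

theorem logKoebeHalfPlane_div_one_sub {z : ℂ} (hz : z ≠ 1) :
    logKoebeHalfPlane (z / (1 - z)) = z / (1 - z) ^ 2 * ((‖1 - z‖ : ℝ) : ℂ) ^ 2 *
      ((Real.exp ((4 * z / (1 - z)).re) : ℝ) : ℂ) := by
  have h₁ : 1 - z ≠ 0 := sub_ne_zero.mpr hz.symm
  have h₂ : conj (1 - z) ≠ 0 := (map_ne_zero _).mpr h₁
  have hden : 1 + conj (z / (1 - z)) = (conj (1 - z))⁻¹ := by
    rw [map_div₀, map_sub, map_one] at *
    field_simp
    ring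
  have hre : (4 * z / (1 - z)).re = 4 * (z / (1 - z)).re := by
    rw [mul_div_assoc]; simp
  rw [logKoebeHalfPlane, hden, hre, ← mul_conj']
  field_simp

theorem stmt_13 (f₀ : ℂ → ℂ)
    (hf₀ : ∀ z : ℂ, z ≠ 1 →
        f₀ z = z / (1 - z) ^ 2 * ((‖1 - z‖ : ℝ) : ℂ) ^ 2 *
          ((Real.exp ((4 * z / (1 - z)).re) : ℝ) : ℂ)) :
    Set.InjOn f₀ (ball (0 : ℂ) 1) ∧
      f₀ '' ball (0 : ℂ) 1 = {w : ℂ | w.im = 0 ∧ w.re ≤ -(Real.exp 2)⁻¹}ᶜ := by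
  have hbij : BijOn f₀ (ball 0 1) koebeSlitᶜ := by
    refine (bijOn_logKoebeHalfPlane.comp bijOn_div_one_sub_ball).congr fun z hz => ?_
    have hz1 : z ≠ 1 := by rintro rfl; simp at hz
    exact (logKoebeHalfPlane_div_one_sub hz1).trans (hf₀ z hz1).symm
  exact ⟨hbij.injOn, hbij.image_eq⟩
end

section
/- Define the log-harmonic right half-plane mapping f_{1/2} by f_{1/2}(z) = (z/(1 − z))·exp(Re(2z/(1 − z))), which is defined for all z ≠ 1. Then for every θ ∈ (0, 2π), Re f_{1/2}(e^{iθ}) = −1/(2e) and Im f_{1/2}(e^{iθ}) = (1/(2e))·cot(θ/2). -/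
open Complex Metric Set

/-!
Writing `u = exp (θ/2 · I)`, one has `1 - u² = -2 sin (θ/2) · I · u`, hence
`z / (1 - z) = -1/2 + (cot (θ/2) / 2) · I` for `z = u² = exp (θ I)`. In particular the exponential
factor of `f_{1/2}` is the constant `exp (-1)` on the unit circle.
-/

lemma one_sub_exp_mul_I (θ : ℝ) :
    1 - exp (θ * I) = -2 * Real.sin (θ / 2) * I * exp (θ / 2 * I) := by
  have hz : exp (θ * I) = exp (θ / 2 * I) ^ 2 := by
    rw [← exp_nat_mul]; push_cast; ring_nf
  rw [hz, exp_mul_I, ofReal_sin, ofReal_div, ofReal_ofNat]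
  linear_combination -(sin_sq_add_cos_sq ((θ : ℂ) / 2)) + sin ((θ : ℂ) / 2) ^ 2 * I_sq

lemma exp_mul_I_ne_one {θ : ℝ} (hθ : Real.sin (θ / 2) ≠ 0) : exp (θ * I) ≠ 1 := by
  rw [ne_comm, ← sub_ne_zero, one_sub_exp_mul_I]
  exact mul_ne_zero (mul_ne_zero (mul_ne_zero (by norm_num) (ofReal_ne_zero.mpr hθ)) I_ne_zero)
    (exp_ne_zero _)

lemma exp_mul_I_div_one_sub_exp_mul_I {θ : ℝ} (hθ : Real.sin (θ / 2) ≠ 0) :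
    exp (θ * I) / (1 - exp (θ * I)) = -1 / 2 + (Real.cot (θ / 2) / 2 : ℝ) * I := by
  have hs : sin ((θ : ℂ) / 2) ≠ 0 := by exact_mod_cast hθ
  have hcoef : (-1 / 2 + (Real.cot (θ / 2) / 2 : ℝ) * I) * (-2 * Real.sin (θ / 2) * I) =
      cos (θ / 2) + sin (θ / 2) * I := by
    rw [Real.cot_eq_cos_div_sin]
    push_cast
    field_simp
    linear_combination -cos ((θ : ℂ) / 2) * I_sq
  rw [div_eq_iff (sub_ne_zero.mpr (exp_mul_I_ne_one hθ).symm), one_sub_exp_mul_I, ← mul_assoc,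
    hcoef, ← exp_mul_I, ← exp_add]
  ring_nf

theorem stmt_14 (f : ℂ → ℂ)
    (hf : ∀ z : ℂ, z ≠ 1 →
        f z = z / (1 - z) * ((Real.exp ((2 * z / (1 - z)).re) : ℝ) : ℂ)) :
    ∀ θ ∈ Set.Ioo (0 : ℝ) (2 * Real.pi),
      (f (Complex.exp (θ * Complex.I))).re = -(1 / (2 * Real.exp 1)) ∧
        (f (Complex.exp (θ * Complex.I))).im =
          (1 / (2 * Real.exp 1)) * Real.cot (θ / 2) := by
  rintro θ ⟨hθ0, hθ2π⟩
  have hs : Real.sin (θ / 2) ≠ 0 :=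
    (Real.sin_pos_of_pos_of_lt_pi (by linarith) (by linarith)).ne'
  have hw := exp_mul_I_div_one_sub_exp_mul_I hs
  have hre : (exp (θ * I) / (1 - exp (θ * I))).re = -1 / 2 := by
    rw [hw]; simp [-ofReal_cot, -ofReal_div]
  have him : (exp (θ * I) / (1 - exp (θ * I))).im = Real.cot (θ / 2) / 2 := by
    rw [hw]; simp [-ofReal_cot, -ofReal_div]
  have hexp : (2 * exp (θ * I) / (1 - exp (θ * I))).re = -1 := by
    norm_num [mul_div_assoc, hre]
  rw [hf _ (exp_mul_I_ne_one hs), hexp, re_mul_ofReal, im_mul_ofReal, hre, him, Real.exp_neg]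
  constructor <;> field_simp
end

section
/- Define the log-harmonic two-slits mapping LS by LS(z) = (z/(1 − z²))·|1 − z²|·exp(Re(2z²/(1 − z²))), which is defined for all z ≠ ±1. Then LS(e^{iθ}) = i/e for every θ ∈ (0, π), and LS(e^{iθ}) = −i/e for every θ ∈ (π, 2π). -/
/-!
On the unit circle, `z = e^{iθ}` gives `1 - z² = -2i sin θ · z`. Hence `z / (1 - z²) = i / (2 sin θ)`,
`|1 - z²| = 2 |sin θ|` and `2z² / (1 - z²) = -1 + i cot θ`, so that
`LS(e^{iθ}) = sign (sin θ) · i / e`.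
-/

open Complex Metric Set

noncomputable def logHarmonicTwoSlits (z : ℂ) : ℂ :=
  z / (1 - z ^ 2) * ((‖1 - z ^ 2‖ : ℝ) : ℂ) * ((Real.exp ((2 * z ^ 2 / (1 - z ^ 2)).re) : ℝ) : ℂ)

namespace Complex

variable {θ : ℝ}

lemma one_sub_exp_mul_I_sq (θ : ℝ) :
    1 - exp (θ * I) ^ 2 = -2 * Real.sin θ * I * exp (θ * I) := by
  rw [exp_mul_I, ofReal_sin]
  linear_combination -sin_sq_add_cos_sq (θ : ℂ) + sin (θ : ℂ) ^ 2 * I_sq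

lemma one_sub_exp_mul_I_sq_ne_zero (hs : Real.sin θ ≠ 0) : 1 - exp (θ * I) ^ 2 ≠ 0 := by
  rw [one_sub_exp_mul_I_sq]
  exact mul_ne_zero (mul_ne_zero (mul_ne_zero (by norm_num) (ofReal_ne_zero.mpr hs)) I_ne_zero)
    (exp_ne_zero _)

lemma exp_mul_I_div_one_sub_sq (hs : Real.sin θ ≠ 0) :
    exp (θ * I) / (1 - exp (θ * I) ^ 2) = I / (2 * Real.sin θ) := by
  have hs' : sin (θ : ℂ) ≠ 0 := by rwa [← ofReal_sin, ofReal_ne_zero]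
  rw [one_sub_exp_mul_I_sq, div_eq_div_iff (by simp [hs', exp_ne_zero]) (by simp [hs'])]
  linear_combination 2 * Real.sin θ * exp (θ * I) * I_sq

lemma norm_one_sub_exp_mul_I_sq (θ : ℝ) : ‖1 - exp (θ * I) ^ 2‖ = 2 * |Real.sin θ| := by
  simp [one_sub_exp_mul_I_sq, norm_exp_ofReal_mul_I, -ofReal_sin]

lemma re_two_mul_exp_mul_I_sq_div_one_sub_sq (hs : Real.sin θ ≠ 0) :
    (2 * exp (θ * I) ^ 2 / (1 - exp (θ * I) ^ 2)).re = -1 := by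
  have hs' : sin (θ : ℂ) ≠ 0 := by rwa [← ofReal_sin, ofReal_ne_zero]
  have : 2 * exp (θ * I) ^ 2 / (1 - exp (θ * I) ^ 2) = I * exp (θ * I) / Real.sin θ := by
    rw [one_sub_exp_mul_I_sq, div_eq_div_iff (by simp [hs', exp_ne_zero]) (ofReal_ne_zero.mpr hs)]
    linear_combination 2 * Real.sin θ * exp (θ * I) ^ 2 * I_sq
  rw [this, div_ofReal_re, mul_re, I_re, I_im, exp_ofReal_mul_I_im]
  field_simp
  ring

end Complex

theorem logHarmonicTwoSlits_exp_mul_I {θ : ℝ} (hs : Real.sin θ ≠ 0) :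
    logHarmonicTwoSlits (exp (θ * I)) = Real.sign (Real.sin θ) * I / Real.exp 1 := by
  rw [logHarmonicTwoSlits, exp_mul_I_div_one_sub_sq hs, norm_one_sub_exp_mul_I_sq,
    re_two_mul_exp_mul_I_sq_div_one_sub_sq hs, Real.exp_neg]
  have hs' : sin (θ : ℂ) ≠ 0 := by rwa [← ofReal_sin, ofReal_ne_zero]
  rcases hs.lt_or_gt with hneg | hpos
  · rw [abs_of_neg hneg, Real.sign_of_neg hneg]
    push_cast
    field_simp
  · rw [abs_of_pos hpos, Real.sign_of_pos hpos]
    push_cast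
    field_simp

theorem stmt_16 (LS : ℂ → ℂ)
    (hLS : ∀ z : ℂ, z ≠ 1 → z ≠ -1 →
        LS z = z / (1 - z ^ 2) * ((‖1 - z ^ 2‖ : ℝ) : ℂ) *
          ((Real.exp ((2 * z ^ 2 / (1 - z ^ 2)).re) : ℝ) : ℂ)) :
    (∀ θ ∈ Set.Ioo (0 : ℝ) Real.pi,
        LS (Complex.exp (θ * Complex.I)) = Complex.I / Real.exp 1) ∧
      ∀ θ ∈ Set.Ioo Real.pi (2 * Real.pi),
        LS (Complex.exp (θ * Complex.I)) = -Complex.I / Real.exp 1 := by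
  have hLS_circle (θ : ℝ) (hs : Real.sin θ ≠ 0) :
      LS (exp (θ * I)) = Real.sign (Real.sin θ) * I / Real.exp 1 := by
    obtain ⟨hne_one, hne_neg_one⟩ :=
      sq_ne_one_iff.mp (sub_ne_zero.mp (one_sub_exp_mul_I_sq_ne_zero hs)).symm
    exact (hLS _ hne_one hne_neg_one).trans (logHarmonicTwoSlits_exp_mul_I hs)
  refine ⟨fun θ hθ => ?_, fun θ hθ => ?_⟩
  · have hpos : 0 < Real.sin θ := Real.sin_pos_of_pos_of_lt_pi hθ.1 hθ.2
    simp [hLS_circle θ hpos.ne', Real.sign_of_pos hpos]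
  · have hneg : Real.sin θ < 0 := by
      rw [← Real.sin_sub_two_pi]
      exact Real.sin_neg_of_neg_of_neg_pi_lt (by linarith [hθ.2]) (by linarith [hθ.1])
    simp [hLS_circle θ hneg.ne, Real.sign_of_neg hneg, neg_div]
end

section
/- Define LS on the open unit disk 𝔻 by LS(z) = (z/(1 − z²))·|1 − z²|·exp(Re(2z²/(1 − z²))). Then LS is injective on 𝔻 and the image LS(𝔻) equals ℂ \ {w ∈ ℂ : Re w = 0 and |Im w| ≥ 1/e}, i.e., the complex plane minus the two vertical slits {iv : |v| ≥ 1/e}. -/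
/-!
With `ζ = (1 + z²) / (1 - z²)`, which maps the disc two-to-one onto the right half-plane,
`LS(z)² = Q(ζ) := (ζ² - 1) · e^(2 Re ζ - 2) / |ζ + 1|²` (`reducedMap`). As `Q(ζ)` is a positive
multiple of `ζ² - 1`, every solution of `Q(ζ) = v` with `v` non-real has `ζ²` on the ray from `1`
in the direction `v / |v|`, and along that ray `|Q(ζ)|` is a strictly increasing function of
`ρ = |ζ² - 1|` (its logarithmic derivative is `Re ζ / ρ`) running from `0` to `∞`. On the real
axis `Q(a) = e^(2a - 2) (a - 1) / (a + 1)` increases from `-e⁻²` to `∞`. So `Q` maps the right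
half-plane bijectively onto `ℂ ∖ (-∞, -e⁻²]`. Since `LS` is odd and vanishes only at `0`, taking
square roots turns this into injectivity of `LS` and the two slits `{iv : |v| ≥ 1/e}`.
-/

open Complex ComplexConjugate Metric Set Filter

noncomputable section

lemma exists_pos_eq_of_tendsto_atTop {f : ℝ → ℝ} (hf : ContinuousOn f (Ici 0))
    (htop : Tendsto f atTop atTop) {m : ℝ} (hm : f 0 < m) : ∃ x, 0 < x ∧ f x = m := by
  obtain ⟨x, hx, rfl⟩ := intermediate_value_Ici hf htop hm.le
  exact ⟨x, (mem_Ici.1 hx).lt_of_ne fun h => hm.ne (h ▸ rfl), rfl⟩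

namespace Complex

lemma ofReal_re_of_im_eq_zero {z : ℂ} (h : z.im = 0) : (z.re : ℂ) = z :=
  conj_eq_iff_re.1 (conj_eq_iff_im.2 h)

lemma add_one_ne_zero_of_re_pos {z : ℂ} (h : 0 < z.re) : z + 1 ≠ 0 := fun h0 => by
  have := congrArg re h0
  rw [add_re, one_re, zero_re] at this
  linarith

lemma ne_one_of_mem_ball {w : ℂ} (hw : w ∈ ball (0 : ℂ) 1) : w ≠ 1 := by
  rintro rfl
  simp at hw

lemma sq_mem_ball {z : ℂ} (hz : z ∈ ball (0 : ℂ) 1) : z ^ 2 ∈ ball (0 : ℂ) 1 := by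
  rw [mem_ball_zero_iff] at hz ⊢
  rw [norm_pow]
  exact pow_lt_one₀ (norm_nonneg z) hz two_ne_zero

lemma norm_div_norm {v : ℂ} (hv : v ≠ 0) : ‖v / ‖v‖‖ = 1 := by
  rw [norm_div, norm_real, norm_norm, div_self (norm_ne_zero_iff.2 hv)]

lemma re_sq_lt_one_of_norm_eq_one {e : ℂ} (he : ‖e‖ = 1) (him : e.im ≠ 0) : e.re ^ 2 < 1 := by
  have : e.re ^ 2 + e.im ^ 2 = 1 := by
    rw [← one_pow 2, ← he, Complex.sq_norm, normSq_apply]; ring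
  nlinarith [sq_pos_of_ne_zero him]

lemma re_sq_of_sq_eq {z u : ℂ} (h : z ^ 2 = u) : z.re ^ 2 = (‖u‖ + u.re) / 2 := by
  have hnorm : ‖u‖ = z.re ^ 2 + z.im ^ 2 := by
    rw [← h, norm_pow, Complex.sq_norm, normSq_apply]; ring
  rw [hnorm, ← h, sq z, mul_re]
  ring

lemma eq_of_sq_eq_of_re_pos {z₁ z₂ : ℂ} (h₁ : 0 < z₁.re) (h₂ : 0 < z₂.re)
    (h : z₁ ^ 2 = z₂ ^ 2) : z₁ = z₂ := by
  refine (sq_eq_sq_iff_eq_or_eq_neg.1 h).resolve_right fun h' => ?_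
  have := congrArg re h'
  rw [neg_re] at this
  linarith

lemma exists_sq_eq_of_im_ne_zero {u : ℂ} (hu : u.im ≠ 0) : ∃ z : ℂ, 0 < z.re ∧ z ^ 2 = u := by
  obtain ⟨z, hz⟩ := IsAlgClosed.exists_pow_nat_eq u two_pos
  have hre : z.re ≠ 0 := fun h0 => hu <| by rw [← hz, sq, mul_im, h0]; ring
  rcases hre.lt_or_gt with hneg | hpos
  · exact ⟨-z, by rwa [neg_re, neg_pos], by rwa [neg_sq]⟩
  · exact ⟨z, hpos, hz⟩

lemma sq_mem_negRay_iff {w : ℂ} {t : ℝ} (ht : 0 ≤ t) :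
    ((w ^ 2).im = 0 ∧ (w ^ 2).re ≤ -t ^ 2) ↔ (w.re = 0 ∧ t ≤ |w.im|) := by
  have hsq : t ≤ |w.im| ↔ t ^ 2 ≤ w.im ^ 2 := by
    rw [← sq_abs w.im, pow_le_pow_iff_left₀ ht (abs_nonneg _) two_ne_zero]
  rw [hsq, sq w, mul_im, mul_re]
  constructor
  · rintro ⟨him, hre⟩
    have hw : w.re = 0 := by
      rcases mul_eq_zero.1 (show w.re * (2 * w.im) = 0 by linarith) with h | h
      · exact h
      · nlinarith [sq_nonneg w.re, sq_nonneg t]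
    exact ⟨hw, by rw [hw] at hre; linarith⟩
  · rintro ⟨hw, hle⟩
    rw [hw]
    constructor <;> nlinarith

end Complex

namespace TwoSlits

section RayProfile

variable {c : ℝ}

/- For a unit vector `e` with `Re e = c` and `ρ ≥ 0`: `rayNorm c ρ = ‖1 + ρ e‖`, `raySqrtRe c ρ`
is the real part of the square root of `1 + ρ e` in the right half-plane,
`rayDenom c ρ = ‖√(1 + ρ e) + 1‖²`, and `rayProfile c ρ = ‖reducedMap √(1 + ρ e)‖`. -/

def rayNorm (c ρ : ℝ) : ℝ := √(1 + 2 * c * ρ + ρ ^ 2)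

def raySqrtRe (c ρ : ℝ) : ℝ := √((rayNorm c ρ + 1 + c * ρ) / 2)

def rayDenom (c ρ : ℝ) : ℝ := rayNorm c ρ + 2 * raySqrtRe c ρ + 1

def rayProfile (c ρ : ℝ) : ℝ := ρ * Real.exp (2 * raySqrtRe c ρ - 2) / rayDenom c ρ

lemma one_add_two_mul_add_sq_pos (hc : c ^ 2 < 1) (ρ : ℝ) : 0 < 1 + 2 * c * ρ + ρ ^ 2 := by
  nlinarith [sq_nonneg (ρ + c)]

lemma rayNorm_sq (hc : c ^ 2 ≤ 1) (ρ : ℝ) : rayNorm c ρ ^ 2 = 1 + 2 * c * ρ + ρ ^ 2 :=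
  Real.sq_sqrt (by nlinarith [sq_nonneg (ρ + c)])

lemma rayNorm_pos (hc : c ^ 2 < 1) (ρ : ℝ) : 0 < rayNorm c ρ :=
  Real.sqrt_pos.2 (one_add_two_mul_add_sq_pos hc ρ)

lemma abs_one_add_mul_le_rayNorm (hc : c ^ 2 ≤ 1) (ρ : ℝ) : |1 + c * ρ| ≤ rayNorm c ρ :=
  Real.abs_le_sqrt (by nlinarith [mul_nonneg (sq_nonneg ρ) (sub_nonneg.2 hc)])

lemma raySqrtRe_sq (hc : c ^ 2 ≤ 1) (ρ : ℝ) :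
    raySqrtRe c ρ ^ 2 = (rayNorm c ρ + 1 + c * ρ) / 2 :=
  Real.sq_sqrt (by linarith [neg_abs_le (1 + c * ρ), abs_one_add_mul_le_rayNorm hc ρ])

lemma raySqrtRe_nonneg (c ρ : ℝ) : 0 ≤ raySqrtRe c ρ := Real.sqrt_nonneg _

lemma raySqrtRe_pos (hc : c ^ 2 < 1) (ρ : ℝ) : 0 < raySqrtRe c ρ :=
  Real.sqrt_pos.2 (by nlinarith [rayNorm_sq hc.le ρ, rayNorm_pos hc ρ])

lemma rayDenom_pos (c ρ : ℝ) : 0 < rayDenom c ρ := by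
  unfold rayDenom raySqrtRe rayNorm
  positivity

lemma rayProfile_zero (c : ℝ) : rayProfile c 0 = 0 := by simp [rayProfile]

lemma rayProfile_pos (c : ℝ) {ρ : ℝ} (hρ : 0 < ρ) : 0 < rayProfile c ρ :=
  div_pos (mul_pos hρ (Real.exp_pos _)) (rayDenom_pos c ρ)

lemma continuous_rayProfile (c : ℝ) : Continuous (rayProfile c) :=
  Continuous.div (by unfold raySqrtRe rayNorm; fun_prop)
    (by unfold rayDenom raySqrtRe rayNorm; fun_prop) fun ρ => (rayDenom_pos c ρ).ne'

lemma hasDerivAt_rayNorm (hc : c ^ 2 < 1) (ρ : ℝ) :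
    HasDerivAt (rayNorm c) ((c + ρ) / rayNorm c ρ) ρ := by
  have h : HasDerivAt (fun x : ℝ => 1 + 2 * c * x + x ^ 2) (2 * c + 2 * ρ) ρ := by
    refine ((((hasDerivAt_id' ρ).const_mul (2 * c)).const_add 1).add
      (hasDerivAt_pow 2 ρ)).congr_deriv ?_
    norm_num
  refine (h.sqrt (one_add_two_mul_add_sq_pos hc ρ).ne').congr_deriv ?_
  rw [show √(1 + 2 * c * ρ + ρ ^ 2) = rayNorm c ρ from rfl]
  field_simp

lemma hasDerivAt_raySqrtRe (hc : c ^ 2 < 1) (ρ : ℝ) :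
    HasDerivAt (raySqrtRe c) (((c + ρ) / rayNorm c ρ + c) / (4 * raySqrtRe c ρ)) ρ := by
  have h : HasDerivAt (fun x => (rayNorm c x + 1 + c * x) / 2)
      (((c + ρ) / rayNorm c ρ + c) / 2) ρ := by
    refine ((((hasDerivAt_rayNorm hc ρ).add_const 1).add
      ((hasDerivAt_id' ρ).const_mul c)).div_const 2).congr_deriv ?_
    ring
  refine (h.sqrt (by nlinarith [rayNorm_sq hc.le ρ, rayNorm_pos hc ρ])).congr_deriv ?_
  rw [show √((rayNorm c ρ + 1 + c * ρ) / 2) = raySqrtRe c ρ from rfl]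
  ring

lemma hasDerivAt_rayProfile (hc : c ^ 2 < 1) {ρ : ℝ} (hρ : 0 < ρ) :
    HasDerivAt (rayProfile c) (raySqrtRe c ρ * rayProfile c ρ / ρ) ρ := by
  have hE := (((hasDerivAt_raySqrtRe hc ρ).const_mul 2).sub_const 2).exp
  have hN : HasDerivAt (rayDenom c) _ ρ :=
    ((hasDerivAt_rayNorm hc ρ).add ((hasDerivAt_raySqrtRe hc ρ).const_mul 2)).add_const 1
  refine (((hasDerivAt_id' ρ).mul hE).div hN (rayDenom_pos c ρ).ne').congr_deriv ?_
  have hR : 0 < rayNorm c ρ := rayNorm_pos hc ρ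
  have hA : 0 < raySqrtRe c ρ := raySqrtRe_pos hc ρ
  have hA2 := raySqrtRe_sq hc.le ρ
  have hR2 := rayNorm_sq hc.le ρ
  have hN0 := rayDenom_pos c ρ
  simp only [rayProfile, rayDenom, Pi.mul_apply] at hN0 ⊢
  set R := rayNorm c ρ
  set A := raySqrtRe c ρ
  set E := Real.exp (2 * A - 2)
  field_simp
  linear_combination 4 * E * R * (1 - 2 * A - R) * hA2 - 2 * E * R * hR2

lemma strictMonoOn_rayProfile (hc : c ^ 2 < 1) : StrictMonoOn (rayProfile c) (Ici 0) := by
  refine strictMonoOn_of_deriv_pos (convex_Ici 0) (continuous_rayProfile c).continuousOn ?_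
  intro ρ hρ
  rw [interior_Ici, mem_Ioi] at hρ
  rw [(hasDerivAt_rayProfile hc hρ).deriv]
  exact div_pos (mul_pos (raySqrtRe_pos hc ρ) (rayProfile_pos c hρ)) hρ

lemma le_rayProfile (hc : c ^ 2 ≤ 1) {ρ : ℝ} (hρ : 0 ≤ ρ) :
    (1 + c) * ρ / (4 * Real.exp 2) ≤ rayProfile c ρ := by
  have hc1 : c ≤ 1 := by nlinarith
  have hR2 := rayNorm_sq hc ρ
  have hA2 := raySqrtRe_sq hc ρ
  have hA0 := raySqrtRe_nonneg c ρ
  have hR : rayNorm c ρ ≤ 1 + ρ := Real.sqrt_le_iff.2 ⟨by linarith, by nlinarith⟩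
  have hR' : ρ + c ≤ rayNorm c ρ := (le_abs_self _).trans (Real.abs_le_sqrt (by nlinarith))
  have hA : raySqrtRe c ρ ≤ 1 + ρ := by nlinarith
  have hN : rayDenom c ρ ≤ 4 * (1 + ρ) := by unfold rayDenom; linarith
  have hE : (1 + c) * (1 + ρ) / Real.exp 2 ≤ Real.exp (2 * raySqrtRe c ρ - 2) := by
    rw [Real.exp_sub, div_le_div_iff_of_pos_right (Real.exp_pos 2)]
    nlinarith [Real.quadratic_le_exp_of_nonneg (by linarith : 0 ≤ 2 * raySqrtRe c ρ)]
  calc (1 + c) * ρ / (4 * Real.exp 2)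
      = ρ * ((1 + c) * (1 + ρ) / Real.exp 2) / (4 * (1 + ρ)) := by field_simp
    _ ≤ ρ * Real.exp (2 * raySqrtRe c ρ - 2) / rayDenom c ρ := by
      gcongr
      exact rayDenom_pos c ρ

lemma tendsto_rayProfile_atTop (hc : c ^ 2 < 1) : Tendsto (rayProfile c) atTop atTop := by
  have hc1 : 0 < 1 + c := by nlinarith
  refine tendsto_atTop_mono' _ ?_ ((tendsto_id.const_mul_atTop hc1).atTop_div_const
    (by positivity : 0 < 4 * Real.exp 2))
  filter_upwards [eventually_ge_atTop 0] with ρ hρ using le_rayProfile hc.le hρ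

end RayProfile

section RealProfile

def realProfile (a : ℝ) : ℝ := Real.exp (2 * a - 2) * ((a - 1) / (a + 1))

lemma realProfile_zero : realProfile 0 = -Real.exp (-2) := by
  simp [realProfile]

lemma continuousOn_realProfile : ContinuousOn realProfile (Ici 0) :=
  ContinuousOn.mul (by fun_prop) <| ContinuousOn.div (by fun_prop) (by fun_prop)
    fun a ha => by linarith [mem_Ici.1 ha]

lemma hasDerivAt_realProfile {a : ℝ} (ha : a + 1 ≠ 0) :
    HasDerivAt realProfile (2 * a ^ 2 * Real.exp (2 * a - 2) / (a + 1) ^ 2) a := by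
  have hE := (((hasDerivAt_id' a).const_mul 2).sub_const 2).exp
  refine (hE.mul (((hasDerivAt_id' a).sub_const 1).div
    ((hasDerivAt_id' a).add_const 1) ha)).congr_deriv ?_
  simp only [Pi.div_apply]
  field_simp
  ring

lemma strictMonoOn_realProfile : StrictMonoOn realProfile (Ici 0) := by
  refine strictMonoOn_of_deriv_pos (convex_Ici 0) continuousOn_realProfile ?_
  intro a ha
  rw [interior_Ici, mem_Ioi] at ha
  rw [(hasDerivAt_realProfile (by linarith)).deriv]
  positivity

lemma tendsto_realProfile_atTop : Tendsto realProfile atTop atTop := by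
  refine tendsto_atTop_mono' _ ?_
    ((tendsto_atTop_add_const_right _ 1 tendsto_id).atTop_div_const (by norm_num : (0 : ℝ) < 3))
  filter_upwards [eventually_ge_atTop 2] with a ha
  have h1 : a + 1 ≤ Real.exp (2 * a - 2) := by
    linarith [Real.add_one_le_exp a, Real.exp_le_exp.2 (by linarith : a ≤ 2 * a - 2)]
  have h2 : 1 / 3 ≤ (a - 1) / (a + 1) := by
    rw [div_le_div_iff₀ (by norm_num) (by linarith)]
    linarith
  calc (id a + 1) / 3 = (a + 1) * (1 / 3) := by rw [id]; ring
    _ ≤ realProfile a := mul_le_mul h1 h2 (by norm_num) (Real.exp_pos _).le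

end RealProfile

section ReducedMap

def reducedWeight (ζ : ℂ) : ℝ := Real.exp (2 * ζ.re - 2) / normSq (ζ + 1)

def reducedMap (ζ : ℂ) : ℂ := (ζ ^ 2 - 1) * reducedWeight ζ

lemma reducedWeight_nonneg (ζ : ℂ) : 0 ≤ reducedWeight ζ :=
  div_nonneg (Real.exp_pos _).le (normSq_nonneg _)

lemma reducedWeight_pos {ζ : ℂ} (h : ζ + 1 ≠ 0) : 0 < reducedWeight ζ :=
  div_pos (Real.exp_pos _) (normSq_pos.2 h)

lemma reducedMap_im (ζ : ℂ) : (reducedMap ζ).im = 2 * ζ.re * ζ.im * reducedWeight ζ := by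
  simp only [reducedMap, mul_im, sub_im, sq, one_im, ofReal_re, ofReal_im]
  ring

lemma reducedMap_im_eq_zero_iff {ζ : ℂ} (h : 0 < ζ.re) :
    (reducedMap ζ).im = 0 ↔ ζ.im = 0 := by
  have hw := reducedWeight_pos (add_one_ne_zero_of_re_pos h)
  rw [reducedMap_im]
  constructor
  · intro h0
    simpa [h.ne', hw.ne'] using h0
  · intro h0
    rw [h0]
    ring

lemma reducedMap_ofReal {a : ℝ} (ha : a + 1 ≠ 0) : reducedMap a = realProfile a := by
  have hnorm : normSq ((a : ℂ) + 1) = (a + 1) ^ 2 := by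
    rw [← ofReal_one, ← ofReal_add, normSq_ofReal, sq]
  have ha' : (a : ℂ) + 1 ≠ 0 := mod_cast ha
  simp only [reducedMap, reducedWeight, realProfile, ofReal_re, hnorm]
  push_cast
  field_simp
  ring

lemma reducedMap_eq_rayProfile_mul {ζ e : ℂ} {ρ : ℝ} (hre : 0 < ζ.re) (he : ‖e‖ = 1)
    (hζ : ζ ^ 2 = 1 + ρ * e) : reducedMap ζ = rayProfile e.re ρ * e := by
  have he2 : e.re ^ 2 + e.im ^ 2 = 1 := by
    rw [← one_pow 2, ← he, Complex.sq_norm, normSq_apply]; ring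
  have hnorm : ‖1 + (ρ : ℂ) * e‖ = rayNorm e.re ρ := by
    rw [norm_def, rayNorm, normSq_apply]
    congr 1
    simp only [add_re, add_im, one_re, one_im, mul_re, mul_im, ofReal_re, ofReal_im]
    linear_combination ρ ^ 2 * he2
  have hA : ζ.re = raySqrtRe e.re ρ := by
    rw [raySqrtRe, ← hnorm, ← Real.sqrt_sq hre.le, re_sq_of_sq_eq hζ]
    simp only [add_re, one_re, mul_re, ofReal_re, ofReal_im, zero_mul, sub_zero]
    ring_nf
  have hN : normSq (ζ + 1) = rayDenom e.re ρ := by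
    rw [rayDenom, ← hA, ← hnorm, ← hζ, norm_pow, Complex.sq_norm, normSq_add, normSq_one,
      map_one, mul_one]
    ring
  rw [reducedMap, reducedWeight, rayProfile, hN, hA, show ζ ^ 2 - 1 = ρ * e by rw [hζ]; ring]
  push_cast
  ring

lemma eq_of_reducedMap_eq_of_sq_mem_ray {ζ₁ ζ₂ e : ℂ} {ρ₁ ρ₂ : ℝ} (he : ‖e‖ = 1)
    (hc : e.re ^ 2 < 1) (h₁ : 0 < ζ₁.re) (h₂ : 0 < ζ₂.re) (hρ₁ : 0 ≤ ρ₁) (hρ₂ : 0 ≤ ρ₂)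
    (hζ₁ : ζ₁ ^ 2 = 1 + ρ₁ * e) (hζ₂ : ζ₂ ^ 2 = 1 + ρ₂ * e)
    (h : reducedMap ζ₁ = reducedMap ζ₂) : ζ₁ = ζ₂ := by
  rw [reducedMap_eq_rayProfile_mul h₁ he hζ₁, reducedMap_eq_rayProfile_mul h₂ he hζ₂] at h
  have he0 : e ≠ 0 := by rintro rfl; norm_num at he
  have hρ := (strictMonoOn_rayProfile hc).injOn hρ₁ hρ₂
    (ofReal_injective (mul_right_cancel₀ he0 h))
  exact eq_of_sq_eq_of_re_pos h₁ h₂ (by rw [hζ₁, hζ₂, hρ])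

lemma sq_eq_one_add_mul_of_reducedMap_eq {ζ v : ℂ} (hre : 0 < ζ.re) (hv : v ≠ 0)
    (h : reducedMap ζ = v) :
    ζ ^ 2 = 1 + ((‖v‖ / reducedWeight ζ : ℝ) : ℂ) * (v / ‖v‖) := by
  have hw : (reducedWeight ζ : ℂ) ≠ 0 :=
    ofReal_ne_zero.2 (reducedWeight_pos (add_one_ne_zero_of_re_pos hre)).ne'
  have hn : (‖v‖ : ℂ) ≠ 0 := ofReal_ne_zero.2 (norm_ne_zero_iff.2 hv)
  rw [show ((‖v‖ / reducedWeight ζ : ℝ) : ℂ) * (v / ‖v‖) = v / reducedWeight ζ by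
    push_cast; field_simp, ← h, reducedMap]
  field_simp
  ring

lemma im_div_norm_ne_zero {v : ℂ} (hv : v.im ≠ 0) : (v / ‖v‖).im ≠ 0 := by
  rw [div_ofReal_im]
  exact div_ne_zero hv (norm_ne_zero_iff.2 fun h0 => hv (by rw [h0, zero_im]))

lemma injOn_reducedMap : InjOn reducedMap {ζ | 0 < ζ.re} := by
  intro ζ₁ (h₁ : 0 < ζ₁.re) ζ₂ (h₂ : 0 < ζ₂.re) h
  by_cases him : (reducedMap ζ₁).im = 0
  · have him₁ := (reducedMap_im_eq_zero_iff h₁).1 him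
    have him₂ := (reducedMap_im_eq_zero_iff h₂).1 (h ▸ him)
    rw [← ofReal_re_of_im_eq_zero him₁, ← ofReal_re_of_im_eq_zero him₂] at h ⊢
    rw [reducedMap_ofReal (by linarith), reducedMap_ofReal (by linarith)] at h
    exact congrArg _ (strictMonoOn_realProfile.injOn (mem_Ici.2 h₁.le) (mem_Ici.2 h₂.le)
      (ofReal_injective h))
  · set v := reducedMap ζ₁
    have hv : v ≠ 0 := fun h0 => him (by rw [h0, zero_im])
    have he := norm_div_norm hv
    have hρ (ζ : ℂ) : 0 ≤ ‖v‖ / reducedWeight ζ :=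
      div_nonneg (norm_nonneg _) (reducedWeight_nonneg _)
    exact eq_of_reducedMap_eq_of_sq_mem_ray he
      (re_sq_lt_one_of_norm_eq_one he (im_div_norm_ne_zero him)) h₁ h₂ (hρ ζ₁) (hρ ζ₂)
      (sq_eq_one_add_mul_of_reducedMap_eq h₁ hv rfl)
      (sq_eq_one_add_mul_of_reducedMap_eq h₂ hv h.symm) h

lemma image_reducedMap :
    reducedMap '' {ζ | 0 < ζ.re} = {v | v.im = 0 ∧ v.re ≤ -Real.exp (-2)}ᶜ := by
  ext v
  constructor
  · rintro ⟨ζ, hζ : 0 < ζ.re, rfl⟩ ⟨him, hle⟩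
    rw [← ofReal_re_of_im_eq_zero ((reducedMap_im_eq_zero_iff hζ).1 him),
      reducedMap_ofReal (by linarith), ofReal_re, ← realProfile_zero] at hle
    exact hle.not_gt (strictMonoOn_realProfile self_mem_Ici (mem_Ici.2 hζ.le) hζ)
  · intro hv
    by_cases him : v.im = 0
    · have hre : realProfile 0 < v.re := by
        rw [realProfile_zero]
        exact lt_of_not_ge fun hle => hv ⟨him, hle⟩
      obtain ⟨a, ha, hav⟩ :=
        exists_pos_eq_of_tendsto_atTop continuousOn_realProfile tendsto_realProfile_atTop hre
      refine ⟨a, by simpa using ha, ?_⟩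
      rw [reducedMap_ofReal (by linarith), hav, ofReal_re_of_im_eq_zero him]
    · have hv0 : v ≠ 0 := fun h0 => him (by rw [h0, zero_im])
      have he := norm_div_norm hv0
      obtain ⟨ρ, hρ, hρv⟩ := exists_pos_eq_of_tendsto_atTop
        (continuous_rayProfile _).continuousOn
        (tendsto_rayProfile_atTop (re_sq_lt_one_of_norm_eq_one he (im_div_norm_ne_zero him)))
        (by rw [rayProfile_zero]; exact norm_pos_iff.2 hv0)
      obtain ⟨ζ, hζ, hζsq⟩ := exists_sq_eq_of_im_ne_zero (u := 1 + ρ * (v / ‖v‖)) (by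
        simpa [hρ.ne'] using im_div_norm_ne_zero him)
      refine ⟨ζ, hζ, ?_⟩
      rw [reducedMap_eq_rayProfile_mul hζ he hζsq, hρv]
      field_simp [ofReal_ne_zero.2 (norm_ne_zero_iff.2 hv0)]

end ReducedMap

section Cayley

def cayley (w : ℂ) : ℂ := (1 + w) / (1 - w)

lemma re_cayley_pos {w : ℂ} (hw : w ∈ ball (0 : ℂ) 1) : 0 < (cayley w).re := by
  have hnorm : w.re * w.re + w.im * w.im < 1 := by
    rw [mem_ball_zero_iff] at hw
    rw [← normSq_apply, ← Complex.sq_norm]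
    nlinarith [norm_nonneg w]
  rw [cayley, div_re, ← add_div]
  refine div_pos ?_ (normSq_pos.2 (sub_ne_zero.2 (ne_one_of_mem_ball hw).symm))
  simp only [add_re, sub_re, add_im, sub_im, one_re, one_im]
  linarith

lemma injOn_cayley : InjOn cayley {w | w ≠ 1} := by
  intro w₁ h₁ w₂ h₂ h
  rw [cayley, cayley,
    div_eq_div_iff (sub_ne_zero.2 (Ne.symm h₁)) (sub_ne_zero.2 (Ne.symm h₂))] at h
  linear_combination h / 2

lemma exists_cayley_eq {ζ : ℂ} (hζ : 0 < ζ.re) : ∃ w ∈ ball (0 : ℂ) 1, cayley w = ζ := by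
  have hζ1 := add_one_ne_zero_of_re_pos hζ
  refine ⟨(ζ - 1) / (ζ + 1), ?_, ?_⟩
  · rw [mem_ball_zero_iff, norm_div, div_lt_one (norm_pos_iff.2 hζ1),
      ← sq_lt_sq₀ (norm_nonneg _) (norm_nonneg _), Complex.sq_norm, Complex.sq_norm,
      normSq_apply, normSq_apply]
    simp only [add_re, sub_re, add_im, sub_im, one_re, one_im]
    nlinarith
  · have h : 1 - (ζ - 1) / (ζ + 1) = 2 / (ζ + 1) := by field_simp; ring
    rw [cayley, h, div_eq_iff (div_ne_zero two_ne_zero hζ1)]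
    field_simp
    ring

end Cayley

section TwoSlitsMap

def twoSlits (z : ℂ) : ℂ :=
  z / (1 - z ^ 2) * ((‖1 - z ^ 2‖ : ℝ) : ℂ) * ((Real.exp ((2 * z ^ 2 / (1 - z ^ 2)).re) : ℝ) : ℂ)

lemma twoSlits_neg (z : ℂ) : twoSlits (-z) = -twoSlits z := by
  simp only [twoSlits, neg_sq, neg_div, neg_mul]

lemma twoSlits_eq_zero_iff {z : ℂ} (hz : 1 - z ^ 2 ≠ 0) : twoSlits z = 0 ↔ z = 0 := by
  simp [twoSlits, hz]

lemma twoSlits_sq {z : ℂ} (hz : 1 - z ^ 2 ≠ 0) :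
    twoSlits z ^ 2 = reducedMap (cayley (z ^ 2)) := by
  have hsub : cayley (z ^ 2) - 1 = 2 * z ^ 2 / (1 - z ^ 2) := by
    rw [cayley]; field_simp; ring
  have hadd : cayley (z ^ 2) + 1 = 2 / (1 - z ^ 2) := by
    rw [cayley]; field_simp; ring
  have hre : 2 * (cayley (z ^ 2)).re - 2 = 2 * (2 * z ^ 2 / (1 - z ^ 2)).re := by
    rw [← hsub, sub_re, one_re]; ring
  have hnormSq : (normSq (cayley (z ^ 2) + 1) : ℂ) = 4 / ((1 - z ^ 2) * conj (1 - z ^ 2)) := by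
    rw [hadd, normSq_div, ofReal_div, ← mul_conj, ← mul_conj, map_ofNat]
    norm_num
  have hnorm : ((‖1 - z ^ 2‖ : ℝ) : ℂ) ^ 2 = (1 - z ^ 2) * conj (1 - z ^ 2) := by
    rw [← ofReal_pow, Complex.sq_norm, mul_conj]
  have hconj : conj (1 - z ^ 2) ≠ 0 := (map_ne_zero _).2 hz
  rw [reducedMap, reducedWeight, hre, show cayley (z ^ 2) ^ 2 - 1 =
    (cayley (z ^ 2) - 1) * (cayley (z ^ 2) + 1) by ring, ofReal_div, hnormSq, hsub, hadd,
    twoSlits, mul_pow, mul_pow, hnorm, ← ofReal_pow, ← Real.exp_nat_mul]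
  push_cast
  field_simp
  ring

lemma one_sub_sq_ne_zero {z : ℂ} (hz : z ∈ ball (0 : ℂ) 1) : 1 - z ^ 2 ≠ 0 :=
  sub_ne_zero.2 (ne_one_of_mem_ball (sq_mem_ball hz)).symm

lemma injOn_twoSlits : InjOn twoSlits (ball (0 : ℂ) 1) := by
  intro z₁ h₁ z₂ h₂ h
  have hsq : z₁ ^ 2 = z₂ ^ 2 := by
    refine injOn_cayley (ne_one_of_mem_ball (sq_mem_ball h₁))
      (ne_one_of_mem_ball (sq_mem_ball h₂)) (injOn_reducedMap (re_cayley_pos (sq_mem_ball h₁))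
        (re_cayley_pos (sq_mem_ball h₂)) ?_)
    rw [← twoSlits_sq (one_sub_sq_ne_zero h₁), ← twoSlits_sq (one_sub_sq_ne_zero h₂), h]
  rcases sq_eq_sq_iff_eq_or_eq_neg.1 hsq with h' | rfl
  · exact h'
  · rw [twoSlits_neg] at h
    have h0 : z₂ = 0 :=
      (twoSlits_eq_zero_iff (one_sub_sq_ne_zero h₂)).1 (by linear_combination -h / 2)
    rw [h0, neg_zero]

lemma sq_mem_image_reducedMap_iff {w : ℂ} :
    w ^ 2 ∈ reducedMap '' {ζ | 0 < ζ.re} ↔ w ∈ twoSlits '' ball (0 : ℂ) 1 := by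
  constructor
  · rintro ⟨ζ, hζ, hζw⟩
    obtain ⟨u, hu, rfl⟩ := exists_cayley_eq hζ
    obtain ⟨z, rfl⟩ := IsAlgClosed.exists_pow_nat_eq u two_pos
    have hz : z ∈ ball (0 : ℂ) 1 := by
      rw [mem_ball_zero_iff, norm_pow] at hu
      rw [mem_ball_zero_iff]
      nlinarith [norm_nonneg z]
    rcases sq_eq_sq_iff_eq_or_eq_neg.1 ((twoSlits_sq (one_sub_sq_ne_zero hz)).trans hζw)
      with h | h
    · exact ⟨z, hz, h⟩
    · exact ⟨-z, by simpa using hz, by rw [twoSlits_neg, h, neg_neg]⟩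
  · rintro ⟨z, hz, rfl⟩
    exact ⟨cayley (z ^ 2), re_cayley_pos (sq_mem_ball hz),
      (twoSlits_sq (one_sub_sq_ne_zero hz)).symm⟩

lemma image_twoSlits :
    twoSlits '' ball (0 : ℂ) 1 = {w : ℂ | w.re = 0 ∧ (Real.exp 1)⁻¹ ≤ |w.im|}ᶜ := by
  have ht : Real.exp (-2) = (Real.exp 1)⁻¹ ^ 2 := by
    rw [← Real.exp_neg, ← Real.exp_nat_mul]; norm_num
  ext w
  rw [← sq_mem_image_reducedMap_iff, image_reducedMap, mem_compl_iff, mem_compl_iff,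
    mem_ofPred_eq, mem_ofPred_eq, ht, sq_mem_negRay_iff (by positivity)]

end TwoSlitsMap

end TwoSlits

end

theorem stmt_17 (LS : ℂ → ℂ)
    (hLS : ∀ z : ℂ, z ≠ 1 → z ≠ -1 →
        LS z = z / (1 - z ^ 2) * ((‖1 - z ^ 2‖ : ℝ) : ℂ) *
          ((Real.exp ((2 * z ^ 2 / (1 - z ^ 2)).re) : ℝ) : ℂ)) :
    Set.InjOn LS (ball (0 : ℂ) 1) ∧
      LS '' ball (0 : ℂ) 1 = {w : ℂ | w.re = 0 ∧ (Real.exp 1)⁻¹ ≤ |w.im|}ᶜ := by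
  have hEq : EqOn LS TwoSlits.twoSlits (ball (0 : ℂ) 1) := fun z hz =>
    hLS z (ne_one_of_mem_ball hz) (by rintro rfl; simp at hz)
  exact ⟨TwoSlits.injOn_twoSlits.congr hEq.symm, hEq.image_eq.trans TwoSlits.image_twoSlits⟩
end
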